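/- arXiv:1202.4686 — 3 statements merged into one kernel-verified Lean document; each statement's English description precedes it below -/
import Mathlib

section
/- Cone Lemma: Let 𝒯 be a parallelogram tiling and let α > 0 be a lower bound on all interior angles of the tiles. Let W be the worm determined by a tile T and an edge e of T with endpoints e₁, e₂. Then no tile of W intersects the open cone e₁ + C(e₁ − e₂, α) or the open cone e₂ + C(e₂ − e₁, α), where C(x, α) = { z ∈ ℝ² : the angle between x and z is strictly less than α }. -/
open InnerProductGeometry Real RealInnerProductSpace

noncomputable section

/-- A parallelogram in ℝ², given by a base point and two linearly independent edge vectors. -/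
structure Pgram where
  a : EuclideanSpace ℝ (Fin 2)
  u : EuclideanSpace ℝ (Fin 2)
  v : EuclideanSpace ℝ (Fin 2)
  indep : LinearIndependent ℝ ![u, v]

namespace Pgram

def carrier (P : Pgram) : Set (EuclideanSpace ℝ (Fin 2)) :=
  {x | ∃ s t : ℝ, s ∈ Set.Icc (0:ℝ) 1 ∧ t ∈ Set.Icc (0:ℝ) 1 ∧ x = P.a + s • P.u + t • P.v}

def vertexSet (P : Pgram) : Set (EuclideanSpace ℝ (Fin 2)) := {P.a, P.a + P.u, P.a + P.u + P.v, P.a + P.v}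

def edgeSet (P : Pgram) : Set (Set (EuclideanSpace ℝ (Fin 2))) :=
  { segment ℝ P.a (P.a + P.u), segment ℝ (P.a + P.v) (P.a + P.v + P.u),
    segment ℝ P.a (P.a + P.v), segment ℝ (P.a + P.u) (P.a + P.u + P.v) }

end Pgram

/-- A locally finite, vertex-to-vertex tiling of the plane by parallelograms. -/
structure PgramTiling where
  tiles : Set Pgram
  covers : ∀ x : EuclideanSpace ℝ (Fin 2), ∃ P ∈ tiles, x ∈ P.carrier
  disjointInt : ∀ P ∈ tiles, ∀ Q ∈ tiles, P ≠ Q → interior P.carrier ∩ interior Q.carrier = ∅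
  locallyFinite : ∀ x : EuclideanSpace ℝ (Fin 2), ∀ r : ℝ,
    {P | P ∈ tiles ∧ (P.carrier ∩ Metric.ball x r).Nonempty}.Finite
  vertexToVertex : ∀ P ∈ tiles, ∀ Q ∈ tiles, ∀ x ∈ P.vertexSet, x ∈ Q.carrier → x ∈ Q.vertexSet

/-- A worm: a bi-infinite sequence of tiles, consecutive ones sharing an edge parallel to
a fixed direction `dir`, never backtracking. -/
structure Worm (𝒯 : PgramTiling) where
  seq : ℤ → Pgram
  edge : ℤ → Set (EuclideanSpace ℝ (Fin 2))
  dir : EuclideanSpace ℝ (Fin 2)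
  dir_ne : dir ≠ 0
  mem : ∀ n, seq n ∈ 𝒯.tiles
  edge_mem : ∀ n, edge n ∈ (seq n).edgeSet ∧ edge n ∈ (seq (n+1)).edgeSet
  edge_par : ∀ n, ∃ p q : EuclideanSpace ℝ (Fin 2), edge n = segment ℝ p q ∧ ∃ c : ℝ, q - p = c • dir
  edge_opp : ∀ n, edge n ≠ edge (n - 1)

def Worm.tileSet {𝒯 : PgramTiling} (W : Worm 𝒯) : Set Pgram := Set.range W.seq

def Worm.carrier {𝒯 : PgramTiling} (W : Worm 𝒯) : Set (EuclideanSpace ℝ (Fin 2)) := ⋃ n : ℤ, (W.seq n).carrier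

/-- Congruence of parallelograms: related by an isometry of the plane. -/
def PgramCongruent (P Q : Pgram) : Prop := ∃ f : (EuclideanSpace ℝ (Fin 2)) ≃ᵢ (EuclideanSpace ℝ (Fin 2)), f '' P.carrier = Q.carrier

/-- Q is a translate of P. -/
def IsTranslate (P Q : Pgram) : Prop := ∃ t : EuclideanSpace ℝ (Fin 2), Q.carrier = (fun x => x + t) '' P.carrier

/-- The set of interior angles of the tiles of a tiling. -/
def interiorAngles (𝒯 : PgramTiling) : Set ℝ :=
  {θ | ∃ P ∈ 𝒯.tiles, θ = angle P.u P.v ∨ θ = π - angle P.u P.v}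

/-- The open cone of angle `α` about the direction `x`. -/
def cone (x : EuclideanSpace ℝ (Fin 2)) (α : ℝ) : Set (EuclideanSpace ℝ (Fin 2)) := {z | z ≠ 0 ∧ angle x z < α}

/-- Two parallelograms are edge-adjacent if they share a full edge. -/
def EdgeAdjacent (P Q : Pgram) : Prop := ∃ e, e ∈ P.edgeSet ∧ e ∈ Q.edgeSet


/-! Write `d = q - p`. Every tile of the worm is a parallelogram whose two edges parallel to `d`
are `[x, x + d]` and `[y, y + d]`, where `y - x` makes an angle between `α` and `π - α` with `d`.
Two tiles standing on the same edge on the same side of it would overlap, so the worm leaves an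
edge on the side opposite to the one it came from, or else retraces its own steps. Hence all steps
`y - x` between the edges it meets point to one side of the line `ℝ d`, and every `x - p` lies in
the closed convex cone of vectors on that side at angle at least `α` from the line. A point of a
tile is then `p + v + s d` with `v` in this cone and `0 ≤ s ≤ 1`, which lies in neither open
cone. -/

open Module Set
open scoped EuclideanSpace

namespace Real

theorem abs_sin_mul_cos_le {α θ : ℝ} (hα : 0 ≤ α) (h₁ : α ≤ θ) (h₂ : θ ≤ π - α) :
    |sin α * cos θ| ≤ cos α * sin θ := by
  have hsub : 0 ≤ sin (θ - α) := sin_nonneg_of_nonneg_of_le_pi (by linarith) (by linarith)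
  have hadd : 0 ≤ sin (θ + α) := sin_nonneg_of_nonneg_of_le_pi (by linarith) (by linarith)
  rw [sin_sub] at hsub
  rw [sin_add] at hadd
  exact abs_le.2 ⟨by linarith, by linarith⟩

theorem cos_mul_sin_lt_sin_mul_cos {α θ : ℝ} (hθ : 0 ≤ θ) (h : θ < α) (hα : α < π) :
    cos α * sin θ < sin α * cos θ := by
  have := sin_pos_of_pos_of_lt_pi (sub_pos.2 h) (by linarith)
  rw [sin_sub] at this
  linarith

end Real

section Parallelogram

variable {V : Type*} [AddCommGroup V] [Module ℝ V]

theorem segment_eq_segment_iff {a b c d : V} :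
    segment ℝ a b = segment ℝ c d ↔ (a = c ∧ b = d) ∨ (a = d ∧ b = c) := by
  have key : ∀ {a b c d : V}, segment ℝ a b = segment ℝ c d → a = c ∨ a = d := by
    intro a b c d h
    have hcad := mem_segment_iff_wbtw.1 (h.symm ▸ left_mem_segment ℝ a b)
    have hacb := mem_segment_iff_wbtw.1 (h ▸ left_mem_segment ℝ c d)
    obtain ⟨δ, ⟨hδ, -⟩, rfl⟩ := mem_segment_iff_wbtw.1 (h ▸ right_mem_segment ℝ c d)
    obtain ⟨γ, ⟨hγ, -⟩, rfl⟩ := hacb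
    simp only [AffineMap.lineMap_apply] at hcad ⊢
    rcases wbtw_or_wbtw_smul_vadd_of_nonneg a (b -ᵥ a) hγ hδ with h' | h'
    · exact Or.inl ((wbtw_swap_left_iff ℝ _).1 ⟨h', hcad⟩)
    · exact Or.inr ((wbtw_swap_left_iff ℝ _).1 ⟨h', hcad.symm⟩)
  refine ⟨fun h => ?_, ?_⟩
  · have ha := key h
    have hb := key ((segment_symm ℝ b a).trans h)
    rcases eq_or_ne a b with rfl | hab
    · rw [segment_same] at h
      have hc := h ▸ left_mem_segment ℝ c d
      have hd := h ▸ right_mem_segment ℝ c d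
      simp only [mem_singleton_iff] at hc hd
      exact Or.inl ⟨hc.symm, hd.symm⟩
    · rcases ha with rfl | rfl <;> rcases hb with rfl | rfl <;> simp_all
  · rintro (⟨rfl, rfl⟩ | ⟨rfl, rfl⟩)
    exacts [rfl, segment_symm ℝ _ _]

def parallelogram (x d w : V) : Set V :=
  {z | ∃ s t : ℝ, s ∈ Icc (0:ℝ) 1 ∧ t ∈ Icc (0:ℝ) 1 ∧ z = x + s • d + t • w}

def parallelogramEdges (x d w : V) : Set (Set V) :=
  {segment ℝ x (x + d), segment ℝ (x + w) (x + w + d), segment ℝ x (x + w),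
    segment ℝ (x + d) (x + d + w)}

theorem parallelogram_comm (x d w : V) : parallelogram x w d = parallelogram x d w := by
  ext z
  constructor <;> rintro ⟨s, t, hs, ht, rfl⟩ <;> exact ⟨t, s, ht, hs, by abel⟩

theorem parallelogram_flip (x d w : V) : parallelogram (x + d) (-d) w = parallelogram x d w := by
  ext z
  constructor <;> rintro ⟨s, t, ⟨hs₀, hs₁⟩, ht, rfl⟩ <;>
    exact ⟨1 - s, t, ⟨by linarith, by linarith⟩, ht, by module⟩

theorem parallelogramEdges_comm (x d w : V) :
    parallelogramEdges x w d = parallelogramEdges x d w := by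
  ext
  simp only [parallelogramEdges, mem_insert_iff, mem_singleton_iff]
  tauto

theorem parallelogramEdges_flip (x d w : V) :
    parallelogramEdges (x + d) (-d) w = parallelogramEdges x d w := by
  have h₁ : segment ℝ (x + d) x = segment ℝ x (x + d) := segment_symm ℝ _ _
  have h₂ : segment ℝ (x + d + w) (x + d + w + -d) = segment ℝ (x + w) (x + w + d) := by
    rw [segment_symm, add_right_comm, add_neg_cancel_right, add_right_comm]
  ext
  simp only [parallelogramEdges, add_neg_cancel_right, h₁, h₂, mem_insert_iff, mem_singleton_iff]
  tauto

theorem eq_of_parallelogram_eq {x d w w' : V} (h : LinearIndependent ℝ ![d, w])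
    (h' : parallelogram x d w = parallelogram x d w') : w = w' := by
  have hw : x + w ∈ parallelogram x d w := ⟨0, 1, by simp, by simp, by simp⟩
  have hw' : x + w' ∈ parallelogram x d w' := ⟨0, 1, by simp, by simp, by simp⟩
  obtain ⟨s, t, ⟨hs, -⟩, ⟨ht₀, ht₁⟩, e⟩ := h' ▸ hw
  obtain ⟨s', t', ⟨hs', -⟩, ⟨ht₀', ht₁'⟩, e'⟩ := h' ▸ hw'
  obtain ⟨h₁, h₂⟩ := LinearIndependent.pair_iff.1 h (s + t * s') (t * t' - 1)
    (by linear_combination (norm := module) -e - t • e')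
  have ht : t = 1 := by nlinarith
  have hs0 : s = 0 := by subst ht; linarith
  rw [hs0, ht] at e
  simpa using e

theorem eq_or_eq_of_mem_parallelogramEdges {x d w a b : V} (h : LinearIndependent ℝ ![d, w])
    (hF : segment ℝ a b ∈ parallelogramEdges x d w) (hab : b - a ∈ ℝ ∙ d) :
    segment ℝ a b = segment ℝ x (x + d) ∨ segment ℝ a b = segment ℝ (x + w) (x + w + d) := by
  have hw : w ∉ ℝ ∙ d := fun hw => by
    obtain ⟨c, hc⟩ := Submodule.mem_span_singleton.1 hw
    exact (LinearIndependent.pair_iff' (by simpa using h.ne_zero 0)).1 h c hc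
  have hside : ∀ y, segment ℝ a b ≠ segment ℝ y (y + w) := by
    intro y hy
    rcases segment_eq_segment_iff.1 hy with ⟨rfl, rfl⟩ | ⟨rfl, rfl⟩
    · exact hw (by simpa using hab)
    · exact hw (by simpa using hab)
  rcases hF with hF | hF | hF | hF
  exacts [Or.inl hF, Or.inr hF, (hside _ hF).elim, (hside _ hF).elim]

end Parallelogram

namespace Orientation

variable {E : Type*} [NormedAddCommGroup E] [InnerProductSpace ℝ E] [Fact (finrank ℝ E = 2)]
  (o : Orientation ℝ E (Fin 2))

local notation "ω" => o.areaForm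

theorem abs_areaForm (x y : E) : |ω x y| = ‖x‖ * ‖y‖ * sin (angle x y) := by
  have h := o.inner_sq_add_areaForm_sq x y
  rw [← cos_angle_mul_norm_mul_norm] at h
  have hsin := sin_angle_nonneg x y
  rw [← sq_eq_sq₀ (abs_nonneg _) (by positivity), sq_abs]
  linear_combination h - (‖x‖ * ‖y‖) ^ 2 * sin_sq_add_cos_sq (angle x y)

theorem eq_zero_of_inner_eq_zero_of_areaForm_eq_zero {x u : E} (hx : x ≠ 0) (h₁ : ⟪x, u⟫ = 0)
    (h₂ : ω x u = 0) : u = 0 := by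
  have h := o.inner_sq_add_areaForm_sq x u
  rw [h₁, h₂] at h
  simpa [hx] using h.symm

theorem areaForm_ne_zero_of_linearIndependent {x y : E} (h : LinearIndependent ℝ ![x, y]) :
    ω x y ≠ 0 := by
  intro h0
  have hx : x ≠ 0 := by simpa using h.ne_zero 0
  have hu : ‖x‖ ^ 2 • y - ⟪x, y⟫ • x = 0 := by
    refine o.eq_zero_of_inner_eq_zero_of_areaForm_eq_zero hx ?_ ?_
    · simp [inner_sub_right, real_inner_smul_right]; ring
    · simp [h0]
  have := (LinearIndependent.pair_iff.1 h (-⟪x, y⟫) (‖x‖ ^ 2) (by rw [← hu]; module)).2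
  simp [hx] at this

theorem areaForm_smul_eq_add {d w : E} (h : ω d w ≠ 0) (v : E) :
    ω d w • v = ω v w • d + ω d v • w := by
  have hd : d ≠ 0 := by rintro rfl; simp at h
  set u := ω d w • v - ω v w • d - ω d v • w with hu
  have h₂ : ω d u = 0 := by simp [u]; ring
  have h₃ : ω u w = 0 := by simp [u]; ring
  have h₁ : ⟪d, u⟫ = 0 := by
    have := o.inner_mul_areaForm_sub d u w
    simp_all
  have := o.eq_zero_of_inner_eq_zero_of_areaForm_eq_zero hd h₁ h₂
  rw [hu, sub_sub, sub_eq_zero] at this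
  exact this

theorem mem_interior_parallelogram {x d w z : E} (h₁ : 0 < ω (z - x) w) (h₂ : ω (z - x) w < ω d w)
    (h₃ : 0 < ω d (z - x)) (h₄ : ω d (z - x) < ω d w) : z ∈ interior (parallelogram x d w) := by
  have hw : 0 < ω d w := h₃.trans h₄
  have hc₁ : Continuous fun z => ω (z - x) w := by
    simp_rw [← o.inner_rightAngleRotation_left]; fun_prop
  have hc₂ : Continuous fun z => ω d (z - x) := by
    simp_rw [← o.inner_rightAngleRotation_left]; fun_prop
  let U := {z | 0 < ω (z - x) w ∧ ω (z - x) w < ω d w ∧ 0 < ω d (z - x) ∧ ω d (z - x) < ω d w}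
  have hU : IsOpen U :=
    (isOpen_lt continuous_const hc₁).inter <| (isOpen_lt hc₁ continuous_const).inter <|
      (isOpen_lt continuous_const hc₂).inter (isOpen_lt hc₂ continuous_const)
  refine interior_maximal ?_ hU (show z ∈ U from ⟨h₁, h₂, h₃, h₄⟩)
  rintro z ⟨h₁, h₂, h₃, h₄⟩
  refine ⟨ω (z - x) w / ω d w, ω d (z - x) / ω d w, ⟨by positivity, ?_⟩, ⟨by positivity, ?_⟩, ?_⟩
  · rw [div_le_one hw]; exact h₂.le
  · rw [div_le_one hw]; exact h₄.le
  · rw [add_assoc, ← sub_eq_iff_eq_add', div_eq_inv_mul, div_eq_inv_mul, mul_smul, mul_smul,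
      ← smul_add, ← o.areaForm_smul_eq_add hw.ne', smul_smul, inv_mul_cancel₀ hw.ne', one_smul]

theorem interior_parallelogram_inter_nonempty {x d w w' : E} (hw : 0 < ω d w) (hw' : 0 < ω d w') :
    (interior (parallelogram x d w) ∩ interior (parallelogram x d w')).Nonempty := by
  obtain ⟨ε, hε, hε'⟩ := exists_pos_mul_lt hw' (2 * ω d w + 2 * |ω w w'| + ω d w')
  have hm := mul_le_mul_of_nonneg_left (neg_abs_le (ω w w')) hε.le
  have hm' := mul_le_mul_of_nonneg_left (le_abs_self (ω w w')) hε.le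
  have hε1 : ε < 1 := by nlinarith [abs_nonneg (ω w w')]
  -- for this `ε`, both coordinates of `x + d / 2 + ε w` lie in `(0, 1)` in both frames
  have hz : x + (1 / 2 : ℝ) • d + ε • w - x = (1 / 2 : ℝ) • d + ε • w := by abel
  refine ⟨x + (1 / 2 : ℝ) • d + ε • w, ?_, ?_⟩ <;> apply o.mem_interior_parallelogram <;>
    simp only [hz, map_add, map_smul, LinearMap.add_apply, LinearMap.smul_apply, smul_eq_mul,
      areaForm_apply_self] <;> nlinarith [abs_nonneg (ω w w')]

/-- For `0 ≤ α ≤ π / 2`: the vectors on the positive side of `d` at angle at least `α` from the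
line `ℝ d`. -/
def steepCone (α : ℝ) (d : E) : Set E := {v | |sin α * ⟪d, v⟫| ≤ cos α * ω d v}

variable {o} {α : ℝ} {d : E}

theorem zero_mem_steepCone : (0 : E) ∈ o.steepCone α d := by
  simp [steepCone]

theorem add_mem_steepCone {v v' : E} (hv : v ∈ o.steepCone α d) (hv' : v' ∈ o.steepCone α d) :
    v + v' ∈ o.steepCone α d := by
  simp only [steepCone, mem_ofPred_eq, inner_add_right, map_add, mul_add] at *
  exact (abs_add_le _ _).trans (add_le_add hv hv')

theorem smul_mem_steepCone {v : E} {c : ℝ} (hc : 0 ≤ c) (hv : v ∈ o.steepCone α d) :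
    c • v ∈ o.steepCone α d := by
  simp only [steepCone, mem_ofPred_eq, real_inner_smul_right, map_smul, smul_eq_mul] at *
  rw [mul_left_comm, abs_mul, abs_of_nonneg hc, mul_left_comm (cos α)]
  exact mul_le_mul_of_nonneg_left hv hc

theorem steepCone_neg : (-o).steepCone α (-d) = o.steepCone α d := by
  ext v
  simp [steepCone, areaForm_neg_orientation]

theorem mem_steepCone_of_angle {v : E} (hα : 0 ≤ α) (h₁ : α ≤ angle d v)
    (h₂ : angle d v ≤ π - α) (hv : 0 ≤ ω d v) : v ∈ o.steepCone α d := by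
  have hω : ω d v = ‖d‖ * ‖v‖ * sin (angle d v) := by rw [← o.abs_areaForm, abs_of_nonneg hv]
  have := mul_le_mul_of_nonneg_right (abs_sin_mul_cos_le hα h₁ h₂)
    (mul_nonneg (norm_nonneg d) (norm_nonneg v))
  rw [steepCone, mem_ofPred_eq, hω, ← cos_angle_mul_norm_mul_norm, ← mul_assoc, abs_mul,
    abs_of_nonneg (mul_nonneg (norm_nonneg d) (norm_nonneg v))]
  linarith

theorem le_angle_add_smul_of_mem_steepCone {v : E} {s : ℝ} (hα : 0 < α) (hα' : α ≤ π / 2)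
    (hd : d ≠ 0) (hv : v ∈ o.steepCone α d) (hs : s ≤ 0) (hz : v + s • d ≠ 0) :
    α ≤ angle d (v + s • d) := by
  by_contra! h
  have hN : 0 < ‖d‖ * ‖v + s • d‖ := by positivity
  have key : cos α * |ω d (v + s • d)| < sin α * ⟪d, v + s • d⟫ := by
    rw [o.abs_areaForm, ← cos_angle_mul_norm_mul_norm]
    nlinarith [cos_mul_sin_lt_sin_mul_cos (angle_nonneg d (v + s • d)) h (by linarith [pi_pos])]
  have hsin : 0 ≤ sin α := sin_nonneg_of_nonneg_of_le_pi hα.le (by linarith [pi_pos])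
  have hcos : 0 ≤ cos α := cos_nonneg_of_mem_Icc ⟨by linarith [pi_pos], hα'⟩
  have hinner : ⟪d, v + s • d⟫ ≤ ⟪d, v⟫ := by
    rw [inner_add_right, real_inner_smul_right, real_inner_self_eq_norm_sq]
    nlinarith [sq_nonneg ‖d‖]
  have hω : ω d (v + s • d) = ω d v := by simp
  rw [hω] at key
  linarith [mul_le_mul_of_nonneg_left hinner hsin, le_abs_self (sin α * ⟪d, v⟫),
    mul_le_mul_of_nonneg_left (le_abs_self (ω d v)) hcos, hv.out]

end Orientation

open Orientation

local notation "ℝ²" => EuclideanSpace ℝ (Fin 2)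

namespace Pgram

def IsFrame (P : Pgram) (x d w : ℝ²) : Prop :=
  P.carrier = parallelogram x d w ∧ P.edgeSet = parallelogramEdges x d w ∧
    LinearIndependent ℝ ![d, w] ∧ (angle d w = angle P.u P.v ∨ angle d w = π - angle P.u P.v)

variable {P : Pgram} {x d w y e : ℝ²}

theorem isFrame_self (P : Pgram) : P.IsFrame P.a P.u P.v := ⟨rfl, rfl, P.indep, Or.inl rfl⟩

theorem IsFrame.swap (h : P.IsFrame x d w) : P.IsFrame x w d := by
  obtain ⟨h₁, h₂, h₃, h₄⟩ := h
  exact ⟨h₁.trans (parallelogram_comm x d w).symm, h₂.trans (parallelogramEdges_comm x d w).symm,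
    LinearIndependent.pair_symm_iff.1 h₃, angle_comm w d ▸ h₄⟩

theorem IsFrame.flip (h : P.IsFrame x d w) : P.IsFrame (x + d) (-d) w := by
  obtain ⟨h₁, h₂, h₃, h₄⟩ := h
  refine ⟨h₁.trans (parallelogram_flip x d w).symm, h₂.trans (parallelogramEdges_flip x d w).symm,
    by simpa using h₃, ?_⟩
  rw [angle_neg_left]
  rcases h₄ with h₄ | h₄ <;> rw [h₄]
  exacts [Or.inr rfl, Or.inl (by ring)]

theorem IsFrame.exists_of_segment_eq (h : P.IsFrame x d w)
    (he : segment ℝ y (y + e) = segment ℝ x (x + d)) : ∃ f, P.IsFrame y e f := by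
  rcases segment_eq_segment_iff.1 he with ⟨rfl, he⟩ | ⟨rfl, he⟩
  · exact ⟨w, add_left_cancel he ▸ h⟩
  · obtain rfl : e = -d := by
      rw [← add_right_inj (x + d), he]; abel
    exact ⟨w, h.flip⟩

theorem IsFrame.exists_of_mem_edgeSet (h : P.IsFrame x d w) (he : segment ℝ y (y + e) ∈ P.edgeSet) :
    ∃ f, P.IsFrame y e f := by
  rw [h.2.1] at he
  rcases he with he | he | he | he
  · exact h.exists_of_segment_eq he
  · exact h.swap.flip.swap.exists_of_segment_eq he
  · exact h.swap.exists_of_segment_eq he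
  · exact h.flip.swap.exists_of_segment_eq he

end Pgram

section Tiling

variable {𝒯 : PgramTiling} {d x y : ℝ²} {P : Pgram}

theorem pi_sub_mem_interiorAngles {θ : ℝ} (h : θ ∈ interiorAngles 𝒯) :
    π - θ ∈ interiorAngles 𝒯 := by
  obtain ⟨P, hP, h | h⟩ := h
  exacts [⟨P, hP, Or.inr (h ▸ rfl)⟩, ⟨P, hP, Or.inl (by rw [h]; ring)⟩]

/-- `P` is a tile of `𝒯` whose two edges parallel to `d` are `[x, x + d]` and `[y, y + d]`. -/
def IsRung (𝒯 : PgramTiling) (d x y : ℝ²) (P : Pgram) : Prop :=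
  P ∈ 𝒯.tiles ∧ P.IsFrame x d (y - x)

theorem IsRung.symm (h : IsRung 𝒯 d x y P) : IsRung 𝒯 d y x P :=
  ⟨h.1, by simpa using h.2.swap.flip.swap⟩

theorem exists_isRung_of_mem_edgeSet {a b : ℝ²} (hP : P ∈ 𝒯.tiles)
    (hx : segment ℝ x (x + d) ∈ P.edgeSet) (hF : segment ℝ a b ∈ P.edgeSet) (hab : b - a ∈ ℝ ∙ d)
    (hne : segment ℝ a b ≠ segment ℝ x (x + d)) :
    ∃ y, segment ℝ a b = segment ℝ y (y + d) ∧ IsRung 𝒯 d x y P := by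
  obtain ⟨w, hw⟩ := P.isFrame_self.exists_of_mem_edgeSet hx
  rw [hw.2.1] at hF
  rcases eq_or_eq_of_mem_parallelogramEdges hw.2.2.1 hF hab with h | h
  · exact absurd h hne
  · exact ⟨x + w, h, hP, by simpa using hw⟩

variable (o : Orientation ℝ ℝ² (Fin 2))

local notation "ω" => o.areaForm

theorem IsRung.eq_of_areaForm_pos {y' : ℝ²} {Q : Pgram} (h : IsRung 𝒯 d x y P)
    (h' : IsRung 𝒯 d x y' Q) (hy : 0 < ω d (y - x)) (hy' : 0 < ω d (y' - x)) : y = y' := by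
  obtain rfl : P = Q := by
    by_contra hne
    have hdisj := 𝒯.disjointInt P h.1 Q h'.1 hne
    rw [h.2.1, h'.2.1] at hdisj
    exact (o.interior_parallelogram_inter_nonempty hy hy').ne_empty hdisj
  simpa using eq_of_parallelogram_eq h.2.2.2.1 (h.2.1.symm.trans h'.2.1)

theorem IsRung.mem_steepCone {α : ℝ} (hα : 0 ≤ α) (hang : ∀ θ ∈ interiorAngles 𝒯, α ≤ θ)
    (h : IsRung 𝒯 d x y P) (hy : 0 < ω d (y - x)) : y - x ∈ o.steepCone α d := by
  have hθ : angle d (y - x) ∈ interiorAngles 𝒯 := ⟨P, h.1, h.2.2.2.2⟩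
  have hθ' := hang _ (pi_sub_mem_interiorAngles hθ)
  exact mem_steepCone_of_angle hα (hang _ hθ) (by linarith) hy.le

end Tiling

section Reachable

/-- The edges `[x, x + d]` reached from `[p, p + d]` by crossing tiles of `𝒯` across their edges
parallel to `d`, always towards the side of `d` that is positive for the orientation `o`. -/
inductive Reachable (𝒯 : PgramTiling) (d p : ℝ²) (o : Orientation ℝ ℝ² (Fin 2)) : ℝ² → Prop
  | refl : Reachable 𝒯 d p o p
  | step {x y : ℝ²} {P : Pgram} : Reachable 𝒯 d p o x → IsRung 𝒯 d x y P →
      0 < o.areaForm d (y - x) → Reachable 𝒯 d p o y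

variable {𝒯 : PgramTiling} {d p x y : ℝ²} {P : Pgram} {o : Orientation ℝ ℝ² (Fin 2)} {α : ℝ}

theorem Reachable.sub_mem_steepCone (hα : 0 ≤ α) (hang : ∀ θ ∈ interiorAngles 𝒯, α ≤ θ)
    (h : Reachable 𝒯 d p o x) : x - p ∈ o.steepCone α d := by
  induction h with
  | refl => simpa using zero_mem_steepCone
  | step _ hxy hpos ih =>
    exact sub_add_sub_cancel _ _ p ▸ add_mem_steepCone (hxy.mem_steepCone o hα hang hpos) ih

theorem Reachable.exists_reachable_both (hx : Reachable 𝒯 d p o x) (hxy : IsRung 𝒯 d x y P) :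
    ∃ o', Reachable 𝒯 d p o' x ∧ Reachable 𝒯 d p o' y := by
  rcases (o.areaForm_ne_zero_of_linearIndependent hxy.2.2.2.1).lt_or_gt with hneg | hpos
  · cases hx with
    | refl =>
      exact ⟨-o, .refl, .step .refl hxy (by simpa [areaForm_neg_orientation] using hneg)⟩
    | @step x' _ _ hx' hx'x hpos' =>
      -- both `x'` and `y` lie on the negative side of `[x, x + d]`, so they coincide
      have := hx'x.symm.eq_of_areaForm_pos (-o) hxy
        (by rw [← neg_sub]; simpa [areaForm_neg_orientation] using hpos')
        (by simpa [areaForm_neg_orientation] using hneg)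
      exact ⟨o, .step hx' hx'x hpos', this ▸ hx'⟩
  · exact ⟨o, hx, .step hx hxy hpos⟩

theorem IsRung.exists_eq_add (hα : 0 ≤ α) (hang : ∀ θ ∈ interiorAngles 𝒯, α ≤ θ)
    (hxy : IsRung 𝒯 d x y P) (hx : Reachable 𝒯 d p o x) (hy : Reachable 𝒯 d p o y) {z : ℝ²}
    (hz : z ∈ P.carrier) : ∃ v ∈ o.steepCone α d, ∃ s ∈ Icc (0:ℝ) 1, z = p + v + s • d := by
  rw [hxy.2.1] at hz
  obtain ⟨s, t, hs, ⟨ht₀, ht₁⟩, rfl⟩ := hz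
  refine ⟨(1 - t) • (x - p) + t • (y - p), ?_, s, hs, by module⟩
  exact add_mem_steepCone
    (smul_mem_steepCone (by linarith) (hx.sub_mem_steepCone hα hang))
    (smul_mem_steepCone ht₀ (hy.sub_mem_steepCone hα hang))

end Reachable

theorem notMem_cones {α : ℝ} {o : Orientation ℝ ℝ² (Fin 2)} {p q v : ℝ²} {s : ℝ} (hα : 0 < α)
    (hα' : α ≤ π / 2) (hpq : p ≠ q)
    (hv : v ∈ o.steepCone α (q - p)) (hs : s ∈ Icc (0:ℝ) 1) :
    p + v + s • (q - p) ∉ ((p + ·) '' cone (p - q) α) ∪ ((q + ·) '' cone (q - p) α) := by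
  have hd : q - p ≠ 0 := sub_ne_zero.2 hpq.symm
  rintro (⟨c, ⟨hc, hcα⟩, hpc⟩ | ⟨c, ⟨hc, hcα⟩, hqc⟩)
  · obtain rfl : c = v + (-s) • (p - q) := by
      linear_combination (norm := module) hpc
    have hv' : v ∈ (-o).steepCone α (p - q) := by rwa [← neg_sub, steepCone_neg]
    exact (le_angle_add_smul_of_mem_steepCone hα hα' (sub_ne_zero.2 hpq) hv'
      (by linarith [hs.1]) hc).not_gt hcα
  · obtain rfl : c = v + (s - 1) • (q - p) := by
      linear_combination (norm := module) hqc
    exact (le_angle_add_smul_of_mem_steepCone hα hα' hd hv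
      (by linarith [hs.2]) hc).not_gt hcα

namespace Worm

variable {𝒯 : PgramTiling} (W : Worm 𝒯)

theorem dir_mem_span {p q : ℝ²} (hpq : W.edge 0 = segment ℝ p q) (hne : p ≠ q) :
    W.dir ∈ ℝ ∙ (q - p) := by
  obtain ⟨a, b, hab, c, hc⟩ := W.edge_par 0
  rw [hpq] at hab
  have hc0 : c ≠ 0 := by
    rintro rfl
    rcases segment_eq_segment_iff.1 hab with ⟨rfl, rfl⟩ | ⟨rfl, rfl⟩ <;> simp_all [sub_eq_zero]
  rcases segment_eq_segment_iff.1 hab with ⟨rfl, rfl⟩ | ⟨rfl, rfl⟩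
  · exact Submodule.mem_span_singleton.2 ⟨c⁻¹, by rw [hc, inv_smul_smul₀ hc0]⟩
  · exact Submodule.mem_span_singleton.2
      ⟨-c⁻¹, by rw [← neg_sub, hc, neg_smul_neg, inv_smul_smul₀ hc0]⟩

theorem exists_isRung {d x : ℝ²} (hdir : W.dir ∈ ℝ ∙ d) {k m n : ℤ}
    (hx : W.edge n = segment ℝ x (x + d)) (hn : W.edge n ∈ (W.seq k).edgeSet)
    (hm : W.edge m ∈ (W.seq k).edgeSet) (hmn : W.edge m ≠ W.edge n) :
    ∃ y, W.edge m = segment ℝ y (y + d) ∧ IsRung 𝒯 d x y (W.seq k) := by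
  obtain ⟨a, b, hab, c, hc⟩ := W.edge_par m
  rw [hab] at hm hmn ⊢
  rw [hx] at hn hmn
  exact exists_isRung_of_mem_edgeSet (W.mem k) hn hm (hc ▸ Submodule.smul_mem _ c hdir) hmn

theorem exists_reachable {d p : ℝ²} (hdir : W.dir ∈ ℝ ∙ d) (h0 : W.edge 0 = segment ℝ p (p + d))
    (n : ℤ) : ∃ x, W.edge n = segment ℝ x (x + d) ∧ ∃ o, Reachable 𝒯 d p o x := by
  have hstep : ∀ {i j k : ℤ}, W.edge i ∈ (W.seq k).edgeSet → W.edge j ∈ (W.seq k).edgeSet →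
      W.edge j ≠ W.edge i → (∃ x, W.edge i = segment ℝ x (x + d) ∧ ∃ o, Reachable 𝒯 d p o x) →
      ∃ y, W.edge j = segment ℝ y (y + d) ∧ ∃ o, Reachable 𝒯 d p o y := by
    rintro i j k hi hj hji ⟨x, hx, o, ho⟩
    obtain ⟨y, hy, hxy⟩ := W.exists_isRung hdir hx hi hj hji
    obtain ⟨o', -, ho'⟩ := ho.exists_reachable_both hxy
    exact ⟨y, hy, o', ho'⟩
  induction n using Int.induction_on with
  | zero => exact ⟨p, h0, (EuclideanSpace.basisFun (Fin 2) ℝ).toBasis.orientation, .refl⟩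
  | succ i ih =>
    exact hstep (W.edge_mem i).2 (W.edge_mem (i + 1)).1 (by simpa using W.edge_opp (i + 1)) ih
  | pred i ih =>
    exact hstep (W.edge_mem (-i : ℤ)).1 (by simpa using (W.edge_mem (-i - 1 : ℤ)).2)
      (W.edge_opp (-i : ℤ)).symm ih

end Worm

/-- Cone Lemma: no tile of the worm defined by an edge with endpoints p, q
meets the open cones p + C(p - q, α), q + C(q - p, α), where α > 0 is a lower bound
on all interior angles. -/
theorem stmt3 (𝒯 : PgramTiling) (α : ℝ) (hα : 0 < α)
    (hang : ∀ θ ∈ interiorAngles 𝒯, α ≤ θ)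
    (W : Worm 𝒯) (p q : EuclideanSpace ℝ (Fin 2)) (hpq : W.edge 0 = segment ℝ p q) (hne : p ≠ q) :
    W.carrier ∩ (((p + ·) '' cone (p - q) α) ∪ ((q + ·) '' cone (q - p) α)) = ∅ := by
  have hα' : α ≤ π / 2 := by
    linarith [hang _ ⟨W.seq 0, W.mem 0, Or.inl rfl⟩, hang _ ⟨W.seq 0, W.mem 0, Or.inr rfl⟩]
  have hdir := W.dir_mem_span hpq hne
  have hreach := W.exists_reachable hdir (by rwa [add_sub_cancel])
  refine eq_empty_iff_forall_notMem.2 fun z ⟨hz, hzc⟩ => ?_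
  obtain ⟨k, hk⟩ := mem_iUnion.1 hz
  obtain ⟨x, hx, o, ho⟩ := hreach k
  obtain ⟨y, -, hxy⟩ := W.exists_isRung hdir hx (W.edge_mem k).1
    (by simpa using (W.edge_mem (k - 1)).2) (W.edge_opp k).symm
  obtain ⟨o', hx', hy'⟩ := ho.exists_reachable_both hxy
  obtain ⟨v, hv, s, hs, rfl⟩ := hxy.exists_eq_add hα.le hang hx' hy' hk
  exact notMem_cones hα hα' hne hv hs hzc
end
end

section
/- In a parallelogram tiling whose interior angles have infimum α = 0, the worm W determined by a tile T and an edge e is contained in e ∪ (ℝ² \ aff(e)), where aff(e) is the affine line spanned by e; that is, W meets the line through e only in the edge e itself. -/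
/-!
Let `height` be a linear form vanishing on the direction of the worm. Every edge of the worm is
then a level set of `height`, and every tile of the worm is a slab between the levels of the edge through
which the worm enters it and the edge through which it leaves. Two distinct tiles sharing an edge
lie on opposite sides of it, since otherwise their interiors meet near the midpoint of the edge;
hence an edge borders at most two tiles. Followed from `edge 0`, the worm therefore moves
monotonically away from the line of `edge 0`, except that it may turn back inside a tile, after
which it retraces tiles it has already crossed. By induction, every tile of the worm was entered
at some earlier step moving away from that line, and such a tile meets the line only in `edge 0`.
Running the worm backwards covers the tiles of nonpositive index.
-/

open InnerProductGeometry Real RealInnerProductSpace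

noncomputable section

local notation "ℝ²" => EuclideanSpace ℝ (Fin 2)

open Set Module Topology

theorem LinearMap.apply_ne_zero_of_linearIndependent {V W : Type*} [AddCommGroup V]
    [Module ℝ V] [AddCommGroup W] [Module ℝ W] (hV : finrank ℝ V = 2) {f : V →ₗ[ℝ] W}
    (hf : f ≠ 0) {u v : V} (huv : LinearIndependent ℝ ![u, v]) (hu : f u = 0) : f v ≠ 0 := by
  refine fun hv => hf (LinearMap.ext_on_range
    (huv.span_eq_top_of_card_eq_finrank (by simp [hV])) fun i => ?_)
  fin_cases i <;> simpa

theorem LinearMap.apply_eq_of_mem_affineSpan_pair {K V M : Type*} [Ring K] [AddCommGroup V]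
    [Module K V] [AddCommGroup M] [Module K M] (f : V →ₗ[K] M) {p q x : V} (hpq : f p = f q)
    (hx : x ∈ line[K, p, q]) : f x = f p := by
  obtain ⟨r, rfl⟩ := mem_affineSpan_pair_iff_exists_lineMap_eq.1 hx
  simp [AffineMap.lineMap_apply_module', hpq]

theorem LinearMap.apply_eq_of_mem_segment {V M : Type*} [AddCommGroup V] [Module ℝ V]
    [AddCommGroup M] [Module ℝ M] (f : V →ₗ[ℝ] M) {p q x : V} (hpq : f p = f q)
    (hx : x ∈ segment ℝ p q) : f x = f p :=
  f.apply_eq_of_mem_affineSpan_pair hpq (mem_segment_iff_wbtw.1 hx).mem_affineSpan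

theorem mem_segment_add_iff {V : Type*} [AddCommGroup V] [Module ℝ V] {a u x : V} :
    x ∈ segment ℝ a (a + u) ↔ ∃ s ∈ Icc (0 : ℝ) 1, a + s • u = x := by
  simp [segment_eq_image']

def perpForm (d : ℝ²) : ℝ² →ₗ[ℝ] ℝ where
  toFun x := d 1 * x 0 - d 0 * x 1
  map_add' x y := by simp only [PiLp.add_apply]; ring
  map_smul' c x := by simp only [PiLp.smul_apply, smul_eq_mul, RingHom.id_apply]; ring

theorem perpForm_self (d : ℝ²) : perpForm d d = 0 := by
  simp only [perpForm, LinearMap.coe_mk, AddHom.coe_mk]; ring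

theorem perpForm_ne_zero {d : ℝ²} (hd : d ≠ 0) : perpForm d ≠ 0 := by
  intro h
  have h0 := LinearMap.congr_fun h (EuclideanSpace.single 0 1)
  have h1 := LinearMap.congr_fun h (EuclideanSpace.single 1 1)
  simp [perpForm] at h0 h1
  exact hd (by ext i; fin_cases i <;> simp [h0, h1])

theorem add_mul_pos_of_mul_nonneg_of_mul_pos {K : Type*} [Field K] [LinearOrder K]
    [IsStrictOrderedRing K] {a b c : K} (hab : 0 ≤ a * b) (hbc : 0 < b * c) :
    0 < (a + b) * c := by
  rcases lt_or_gt_of_ne (left_ne_zero_of_mul hbc.ne') with hb | hb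
  · have ha : a ≤ 0 := nonpos_of_mul_nonneg_left hab hb
    have hc : c < 0 := neg_of_mul_pos_right hbc hb.le
    nlinarith
  · have ha : 0 ≤ a := nonneg_of_mul_nonneg_left hab hb
    have hc : 0 < c := pos_of_mul_pos_right hbc hb.le
    nlinarith

namespace Pgram

def bottom (P : Pgram) : Set ℝ² := segment ℝ P.a (P.a + P.u)

def top (P : Pgram) : Set ℝ² := segment ℝ (P.a + P.v) (P.a + P.v + P.u)

def swap (P : Pgram) : Pgram := ⟨P.a, P.v, P.u, LinearIndependent.pair_symm_iff.1 P.indep⟩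

def flip (P : Pgram) : Pgram :=
  ⟨P.a + P.v, P.u, -P.v, LinearIndependent.pair_neg_right_iff.2 P.indep⟩

/-- `e` is an edge of `P` along which `f` is constant, and `f` changes by `δ` from `e` to the
opposite edge. -/
def StandsOn (P : Pgram) (f : ℝ² →ₗ[ℝ] ℝ) (e : Set ℝ²) (δ : ℝ) : Prop :=
  ∃ Q : Pgram, Q.carrier = P.carrier ∧ Q.bottom = e ∧ f Q.u = 0 ∧ f Q.v = δ

variable (P : Pgram) {f : ℝ² →ₗ[ℝ] ℝ}

theorem carrier_swap : P.swap.carrier = P.carrier := by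
  ext x
  constructor <;> rintro ⟨s, t, hs, ht, rfl⟩ <;> exact ⟨t, s, ht, hs, by simp only [swap]; abel⟩

theorem carrier_flip : P.flip.carrier = P.carrier := by
  ext x
  constructor <;> rintro ⟨s, t, hs, ht, rfl⟩ <;>
    exact ⟨s, 1 - t, hs, ⟨by linarith [ht.2], by linarith [ht.1]⟩, by simp only [flip]; module⟩

theorem edgeSet_swap : P.swap.edgeSet = P.edgeSet := by
  simp only [edgeSet, swap]
  ext e; simp only [mem_insert_iff, mem_singleton_iff]; tauto

theorem edgeSet_flip : P.flip.edgeSet = P.edgeSet := by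
  simp only [edgeSet, flip, add_neg_cancel_right]
  rw [show P.a + P.v + P.u + -P.v = P.a + P.u by abel, add_right_comm P.a P.v P.u,
    segment_symm ℝ (P.a + P.v) P.a, segment_symm ℝ (P.a + P.u + P.v)]
  ext e; simp only [mem_insert_iff, mem_singleton_iff]; tauto

theorem exists_rebase {e : Set ℝ²} (he : e ∈ P.edgeSet) :
    ∃ Q : Pgram, Q.carrier = P.carrier ∧ Q.edgeSet = P.edgeSet ∧ Q.bottom = e := by
  simp only [edgeSet, mem_insert_iff, mem_singleton_iff] at he
  rcases he with rfl | rfl | rfl | rfl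
  · exact ⟨P, rfl, rfl, rfl⟩
  · exact ⟨P.flip, P.carrier_flip, P.edgeSet_flip, rfl⟩
  · exact ⟨P.swap, P.carrier_swap, P.edgeSet_swap, rfl⟩
  · refine ⟨P.swap.flip, ?_, ?_, rfl⟩
    · rw [carrier_flip, carrier_swap]
    · rw [edgeSet_flip, edgeSet_swap]

theorem span_eq_top : Submodule.span ℝ {P.u, P.v} = ⊤ := by
  simpa [Matrix.range_cons, Matrix.range_empty, Set.union_singleton, Set.pair_comm] using
    P.indep.span_eq_top_of_card_eq_finrank (by simp)

theorem apply_u_eq_zero {c : ℝ} (hc : ∀ x ∈ P.bottom, f x = c) : f P.u = 0 := by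
  simpa using (hc _ (left_mem_segment ℝ _ _)).trans (hc _ (right_mem_segment ℝ _ _)).symm

theorem apply_v_ne_zero (hf : f ≠ 0) (hu : f P.u = 0) : f P.v ≠ 0 :=
  f.apply_ne_zero_of_linearIndependent (by simp) hf P.indep hu

theorem eq_bottom_or_eq_top (hf : f ≠ 0) (hu : f P.u = 0) {e : Set ℝ²} (he : e ∈ P.edgeSet)
    {c : ℝ} (hc : ∀ x ∈ e, f x = c) : e = P.bottom ∨ e = P.top := by
  have hv := P.apply_v_ne_zero hf hu
  simp only [edgeSet, mem_insert_iff, mem_singleton_iff] at he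
  rcases he with rfl | rfl | rfl | rfl
  · exact .inl rfl
  · exact .inr rfl
  all_goals
    refine absurd ?_ hv
    have h := (hc _ (left_mem_segment ℝ _ _)).trans (hc _ (right_mem_segment ℝ _ _)).symm
    simpa using h

theorem mem_interior_carrier {s t : ℝ} (hs : s ∈ Ioo 0 1) (ht : t ∈ Ioo 0 1) :
    P.a + s • P.u + t • P.v ∈ interior P.carrier := by
  let B := basisOfLinearIndependentOfCardEqFinrank P.indep (by simp)
  have hB : ∀ c₀ c₁ : ℝ, B.equivFun (c₀ • P.u + c₁ • P.v) = ![c₀, c₁] := by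
    intro c₀ c₁
    have h0 : B 0 = P.u := by simp [B]
    have h1 : B 1 = P.v := by simp [B]
    ext i; fin_cases i <;> simp [← h0, ← h1]
  let coords : ℝ² → Fin 2 → ℝ := fun x => B.equivFun (x - P.a)
  have hcont : Continuous coords :=
    B.equivFun.toLinearMap.continuous_of_finiteDimensional.comp (continuous_sub_right P.a)
  have hopen : IsOpen {c : Fin 2 → ℝ | c 0 ∈ Ioo 0 1 ∧ c 1 ∈ Ioo 0 1} :=
    (isOpen_Ioo.preimage (continuous_apply 0)).inter (isOpen_Ioo.preimage (continuous_apply 1))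
  refine interior_maximal ?_ (hopen.preimage hcont) ?_
  · rintro x ⟨hx0, hx1⟩
    refine ⟨coords x 0, coords x 1, Ioo_subset_Icc_self hx0, Ioo_subset_Icc_self hx1, ?_⟩
    have h := B.sum_equivFun (x - P.a)
    simp only [Fin.sum_univ_two, B, coe_basisOfLinearIndependentOfCardEqFinrank] at h
    rw [add_assoc, ← sub_eq_iff_eq_add']
    exact h.symm
  · simpa only [mem_preimage, mem_ofPred_eq, coords, add_assoc, add_sub_cancel_left, hB]
      using ⟨hs, ht⟩

variable {P}

theorem interior_inter_nonempty {Q : Pgram} (hbot : P.bottom ⊆ Q.bottom) (hQu : f Q.u = 0)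
    (hside : 0 < f P.v * f Q.v) : (interior P.carrier ∩ interior Q.carrier).Nonempty := by
  obtain ⟨σ₀, hσ₀, h₀⟩ := mem_segment_add_iff.1 (hbot (left_mem_segment ℝ _ _))
  obtain ⟨σ₁, hσ₁, h₁⟩ := mem_segment_add_iff.1 (hbot (right_mem_segment ℝ _ _))
  have hu : P.u = (σ₁ - σ₀) • Q.u := by
    rw [show P.u = (P.a + P.u) - P.a by abel, ← h₁, ← h₀]; module
  have hσ₀₁ : σ₀ ≠ σ₁ := fun h => P.indep.ne_zero 0 (by simp [hu, h])
  -- the midpoint of `P.bottom` lies strictly inside `Q.bottom`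
  have hσ : (σ₀ + σ₁) / 2 ∈ Ioo 0 1 := by
    constructor <;> by_contra h <;> exact hσ₀₁ (by linarith [hσ₀.1, hσ₀.2, hσ₁.1, hσ₁.2])
  obtain ⟨α, β, hv⟩ := Submodule.mem_span_pair.1 (Q.span_eq_top ▸ Submodule.mem_top (x := P.v))
  have hβ : 0 < β := by
    have hfv : f P.v = β * f Q.v := by simp [← hv, hQu]
    rw [hfv] at hside
    nlinarith [sq_nonneg (f Q.v)]
  have h₁ : ∀ᶠ ε in 𝓝 (0 : ℝ), ε < 1 := eventually_lt_nhds one_pos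
  have h₂ : ∀ᶠ ε in 𝓝 (0 : ℝ), ε * β < 1 :=
    ((continuous_mul_const β).tendsto' 0 0 (zero_mul β)).eventually (eventually_lt_nhds one_pos)
  have h₃ : ∀ᶠ ε in 𝓝 (0 : ℝ), (σ₀ + σ₁) / 2 + ε * α ∈ Ioo 0 1 :=
    ((continuous_const.add (continuous_mul_const α)).tendsto' 0 _ (by simp)).eventually
      (isOpen_Ioo.mem_nhds hσ)
  obtain ⟨ε, ⟨hε₁, hε₂, hε₃⟩, hε₀ : 0 < ε⟩ :=
    (((h₁.and (h₂.and h₃)).filter_mono nhdsWithin_le_nhds).and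
      (self_mem_nhdsWithin : ∀ᶠ ε in 𝓝[>] (0 : ℝ), 0 < ε)).exists
  refine ⟨P.a + (1 / 2 : ℝ) • P.u + ε • P.v, P.mem_interior_carrier (by norm_num) ⟨hε₀, hε₁⟩, ?_⟩
  have hx : P.a + (1 / 2 : ℝ) • P.u + ε • P.v =
      Q.a + ((σ₀ + σ₁) / 2 + ε * α) • Q.u + (ε * β) • Q.v := by
    rw [← h₀, hu, ← hv]; module
  rw [hx]
  exact Q.mem_interior_carrier hε₃ ⟨mul_pos hε₀ hβ, hε₂⟩

variable {e : Set ℝ²} {δ : ℝ}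

theorem StandsOn.ne_zero (h : P.StandsOn f e δ) (hf : f ≠ 0) : δ ≠ 0 := by
  obtain ⟨Q, -, -, hu, rfl⟩ := h
  exact Q.apply_v_ne_zero hf hu

theorem StandsOn.mem_of_apply_eq (h : P.StandsOn f e δ) (hδ : δ ≠ 0) {c : ℝ}
    (he : ∀ y ∈ e, f y = c) {x : ℝ²} (hx : x ∈ P.carrier) (hside : 0 ≤ (c - f x) * δ) :
    x ∈ e ∧ f x = c := by
  obtain ⟨Q, hQ, rfl, hu, rfl⟩ := h
  rw [← hQ] at hx
  obtain ⟨s, t, hs, ht, rfl⟩ := hx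
  have ha : f Q.a = c := he _ (left_mem_segment ℝ _ _)
  have hfx : f (Q.a + s • Q.u + t • Q.v) = c + t * f Q.v := by simp [hu, ha]
  rw [hfx] at hside ⊢
  have ht0 : t = 0 := by
    have : t * f Q.v ^ 2 ≤ 0 := by nlinarith
    exact le_antisymm (nonpos_of_mul_nonpos_left this (by positivity)) ht.1
  subst ht0
  exact ⟨mem_segment_add_iff.2 ⟨s, hs, by simp⟩, by simp⟩

end Pgram

namespace PgramTiling

variable (𝒯 : PgramTiling) {f : ℝ² →ₗ[ℝ] ℝ} {e : Set ℝ²}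

theorem mul_neg_of_standsOn (hf : f ≠ 0) {P Q : Pgram} (hP : P ∈ 𝒯.tiles) (hQ : Q ∈ 𝒯.tiles)
    (hPQ : P ≠ Q) {δ δ' : ℝ} (hPe : P.StandsOn f e δ) (hQe : Q.StandsOn f e δ') :
    δ * δ' < 0 := by
  refine lt_of_le_of_ne (not_lt.1 fun hside => ?_) (mul_ne_zero (hPe.ne_zero hf) (hQe.ne_zero hf))
  obtain ⟨P', hP', hP'e, -, rfl⟩ := hPe
  obtain ⟨Q', hQ', hQ'e, hQ'u, rfl⟩ := hQe
  have h := Pgram.interior_inter_nonempty (hP'e.trans hQ'e.symm).subset hQ'u hside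
  rw [hP', hQ', 𝒯.disjointInt P hP Q hQ hPQ] at h
  exact not_nonempty_empty h

theorem eq_or_eq_or_eq_of_standsOn (hf : f ≠ 0) {P₁ P₂ P₃ : Pgram} (h₁ : P₁ ∈ 𝒯.tiles)
    (h₂ : P₂ ∈ 𝒯.tiles) (h₃ : P₃ ∈ 𝒯.tiles) {δ₁ δ₂ δ₃ : ℝ} (h₁e : P₁.StandsOn f e δ₁)
    (h₂e : P₂.StandsOn f e δ₂) (h₃e : P₃.StandsOn f e δ₃) :
    P₁ = P₂ ∨ P₁ = P₃ ∨ P₂ = P₃ := by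
  by_contra! h
  have h₁₂ := 𝒯.mul_neg_of_standsOn hf h₁ h₂ h.1 h₁e h₂e
  have h₁₃ := 𝒯.mul_neg_of_standsOn hf h₁ h₃ h.2.1 h₁e h₃e
  have h₂₃ := 𝒯.mul_neg_of_standsOn hf h₂ h₃ h.2.2 h₂e h₃e
  -- the three negative products multiply to the square `(δ₁ * δ₂ * δ₃) ^ 2`
  nlinarith [mul_pos_of_neg_of_neg h₁₂ h₁₃, sq_nonneg (δ₁ * δ₂ * δ₃)]

end PgramTiling

namespace Worm

variable {𝒯 : PgramTiling} (W : Worm 𝒯)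

def height : ℝ² →ₗ[ℝ] ℝ := perpForm W.dir

theorem height_ne_zero : W.height ≠ 0 := perpForm_ne_zero W.dir_ne

def level (n : ℤ) : ℝ := W.height (W.edge_par n).choose

/-- At step `j` the worm moves away from the line of `edge 0`: it enters its tile at a level on
the side of `level 0` towards which it moves, and through `edge 0` if at `level 0` itself. -/
def Outward (j : ℤ) : Prop :=
  0 ≤ (W.level (j - 1) - W.level 0) * (W.level j - W.level (j - 1)) ∧
    (W.level (j - 1) = W.level 0 → W.edge (j - 1) = W.edge 0)

/-- The worm may turn back and retrace its tiles, so the invariant records a step `j ≤ n` at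
which the tile of step `n` was entered outward, and which is not itself a turn of the worm. -/
def EnteredOutward (n : ℤ) : Prop :=
  ∃ j ∈ Icc 1 n, W.seq n = W.seq j ∧ W.Outward j ∧ (j = 1 ∨ W.seq j ≠ W.seq (j - 1))

def reverse : Worm 𝒯 where
  seq n := W.seq (1 - n)
  edge n := W.edge (-n)
  dir := W.dir
  dir_ne := W.dir_ne
  mem n := W.mem (1 - n)
  edge_mem n := by
    constructor
    · simpa [neg_add_eq_sub] using (W.edge_mem (-n)).2
    · simpa [sub_add_eq_sub_sub] using (W.edge_mem (-n)).1
  edge_par n := W.edge_par (-n)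
  edge_opp n := by simpa [neg_sub, sub_sub] using (W.edge_opp (1 - n)).symm

variable {W}

theorem height_eq_level {n : ℤ} {x : ℝ²} (hx : x ∈ W.edge n) : W.height x = W.level n := by
  obtain ⟨q, hpq, c, hc⟩ := (W.edge_par n).choose_spec
  rw [hpq] at hx
  refine W.height.apply_eq_of_mem_segment (sub_eq_zero.1 ?_).symm hx
  rw [← map_sub, hc, map_smul, height, perpForm_self, smul_zero]

theorem level_congr {i k : ℤ} (h : W.edge i = W.edge k) : W.level i = W.level k := by
  obtain ⟨p, q, hpq, -⟩ := W.edge_par i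
  have hp : p ∈ W.edge i := hpq ▸ left_mem_segment ℝ p q
  rw [← height_eq_level hp, height_eq_level (h ▸ hp)]

variable (W)

theorem edge_pred_mem (n : ℤ) : W.edge (n - 1) ∈ (W.seq n).edgeSet := by
  simpa using (W.edge_mem (n - 1)).2

theorem exists_rebase (n : ℤ) :
    ∃ Q : Pgram, Q.carrier = (W.seq n).carrier ∧ Q.edgeSet = (W.seq n).edgeSet ∧
      Q.bottom = W.edge (n - 1) ∧ Q.top = W.edge n ∧ W.height Q.u = 0 ∧
      W.height Q.v = W.level n - W.level (n - 1) := by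
  obtain ⟨Q, hc, hE, hb⟩ := (W.seq n).exists_rebase (W.edge_pred_mem n)
  have hu : W.height Q.u = 0 := Q.apply_u_eq_zero fun x hx => height_eq_level (hb ▸ hx)
  have ht : Q.top = W.edge n := by
    rcases Q.eq_bottom_or_eq_top W.height_ne_zero hu (hE ▸ (W.edge_mem n).1)
      (fun x hx => height_eq_level hx) with h | h
    · exact absurd (h.trans hb) (W.edge_opp n)
    · exact h.symm
  refine ⟨Q, hc, hE, hb, ht, hu, ?_⟩
  have h₀ : W.height Q.a = W.level (n - 1) :=
    height_eq_level (by rw [← hb]; exact left_mem_segment ℝ _ _)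
  have h₁ : W.height (Q.a + Q.v) = W.level n :=
    height_eq_level (by rw [← ht]; exact left_mem_segment ℝ _ _)
  rw [map_add] at h₁
  linarith

theorem eq_edge_pred_or_eq_edge {n : ℤ} {e : Set ℝ²} (he : e ∈ (W.seq n).edgeSet) {c : ℝ}
    (hc : ∀ x ∈ e, W.height x = c) : e = W.edge (n - 1) ∨ e = W.edge n := by
  obtain ⟨Q, -, hE, hb, ht, hu, -⟩ := W.exists_rebase n
  rw [← hb, ← ht]
  exact Q.eq_bottom_or_eq_top W.height_ne_zero hu (hE ▸ he) hc

theorem standsOn_entry (n : ℤ) :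
    (W.seq n).StandsOn W.height (W.edge (n - 1)) (W.level n - W.level (n - 1)) := by
  obtain ⟨Q, hc, -, hb, -, hu, hv⟩ := W.exists_rebase n
  exact ⟨Q, hc, hb, hu, hv⟩

theorem standsOn_exit (n : ℤ) :
    (W.seq n).StandsOn W.height (W.edge n) (W.level (n - 1) - W.level n) := by
  obtain ⟨Q, hc, -, -, ht, hu, hv⟩ := W.exists_rebase n
  refine ⟨Q.flip, Q.carrier_flip.trans hc, ht, hu, ?_⟩
  simp only [Pgram.flip, map_neg, hv, neg_sub]

variable {W}

theorem outward_of_edge_pred_eq {j : ℤ} (h : W.edge (j - 1) = W.edge 0) : W.Outward j :=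
  ⟨by simp [level_congr h], fun _ => h⟩

theorem outward_succ {j N : ℤ} (hj : W.Outward j) (hNj : W.seq N = W.seq j)
    (hmove : W.seq (N + 1) ≠ W.seq N) (hexit : W.edge N = W.edge j) : W.Outward (N + 1) := by
  have hentry := W.standsOn_entry (N + 1)
  rw [add_sub_cancel_right, hexit] at hentry
  have hside := 𝒯.mul_neg_of_standsOn W.height_ne_zero (W.mem j) (W.mem (N + 1))
    (fun h => hmove (h.symm.trans hNj.symm)) (W.standsOn_exit j) hentry
  rw [← neg_sub, neg_mul, neg_lt_zero] at hside
  have hpos : 0 < (W.level N - W.level 0) * (W.level (N + 1) - W.level N) := by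
    have h := add_mul_pos_of_mul_nonneg_of_mul_pos hj.1 hside
    rwa [sub_add_sub_cancel', ← level_congr hexit] at h
  refine ⟨by simpa using hpos.le, fun h => ?_⟩
  simp only [add_sub_cancel_right] at h
  simp [h] at hpos

theorem mem_edge_zero_of_outward {j : ℤ} (hj : W.Outward j) {x : ℝ²}
    (hx : x ∈ (W.seq j).carrier) (hxl : W.height x = W.level 0) : x ∈ W.edge 0 := by
  have h := W.standsOn_entry j
  obtain ⟨hxe, hlev⟩ := h.mem_of_apply_eq (h.ne_zero W.height_ne_zero)
    (fun y hy => height_eq_level hy) hx (by rw [hxl]; exact hj.1)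
  exact hj.2 (hlev.symm.trans hxl) ▸ hxe

theorem enteredOutward_succ {N : ℤ} (hN : 1 ≤ N) (ih : ∀ k ∈ Icc 1 N, W.EnteredOutward k) :
    W.EnteredOutward (N + 1) := by
  obtain ⟨j, ⟨hj1, hjN⟩, hNj, hj, hturn⟩ := ih N ⟨hN, le_rfl⟩
  by_cases hstay : W.seq (N + 1) = W.seq N
  · exact ⟨j, ⟨hj1, by omega⟩, hstay.trans hNj, hj, hturn⟩
  have hmove : W.seq (N + 1) ≠ W.seq (N + 1 - 1) := by simpa using hstay
  have hentry : W.edge (N + 1 - 1) = W.edge N := by simp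
  rcases W.eq_edge_pred_or_eq_edge (hNj ▸ (W.edge_mem N).1) (fun x hx => height_eq_level hx)
    with hback | hexit
  · rcases eq_or_lt_of_le hj1 with rfl | hj2
    · exact ⟨N + 1, ⟨by omega, le_rfl⟩, rfl,
        outward_of_edge_pred_eq (hentry.trans (by simpa using hback)), .inr hmove⟩
    -- the worm turns back through the edge by which it entered tile `j`, so it retraces
    have hprev : W.seq (N + 1) = W.seq (j - 1) := by
      rcases 𝒯.eq_or_eq_or_eq_of_standsOn W.height_ne_zero (W.mem j) (W.mem (j - 1))
        (W.mem (N + 1)) (W.standsOn_entry j) (W.standsOn_exit (j - 1))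
        (hback ▸ hentry ▸ W.standsOn_entry (N + 1)) with h | h | h
      · exact absurd h (hturn.resolve_left hj2.ne')
      · exact absurd (h.symm.trans hNj.symm) hstay
      · exact h.symm
    obtain ⟨i, ⟨hi1, hij⟩, hseq, hi, hiturn⟩ := ih (j - 1) ⟨by omega, by omega⟩
    exact ⟨i, ⟨hi1, by omega⟩, hprev.trans hseq, hi, hiturn⟩
  · exact ⟨N + 1, ⟨by omega, le_rfl⟩, rfl, outward_succ hj hNj hstay hexit, .inr hmove⟩

variable (W)

theorem enteredOutward {n : ℤ} (hn : 1 ≤ n) : W.EnteredOutward n := by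
  suffices h : ∀ N, 1 ≤ N → ∀ k ∈ Icc 1 N, W.EnteredOutward k from h n hn n ⟨hn, le_rfl⟩
  intro N hN
  induction N, hN using Int.leInduction with
  | base =>
    rintro k ⟨hk1, hk⟩
    obtain rfl : k = 1 := le_antisymm hk hk1
    exact ⟨1, ⟨le_rfl, le_rfl⟩, rfl, outward_of_edge_pred_eq (by simp), .inl rfl⟩
  | succ N hN ih =>
    rintro k ⟨hk1, hk⟩
    rcases hk.lt_or_eq with hk | rfl
    · exact ih k ⟨hk1, by omega⟩
    · exact enteredOutward_succ hN ih

theorem mem_edge_zero_of_one_le {n : ℤ} (hn : 1 ≤ n) {x : ℝ²} (hx : x ∈ (W.seq n).carrier)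
    (hxl : W.height x = W.level 0) : x ∈ W.edge 0 := by
  obtain ⟨j, -, hnj, hj, -⟩ := W.enteredOutward hn
  exact mem_edge_zero_of_outward hj (hnj ▸ hx) hxl

theorem mem_edge_zero {x p : ℝ²} (hx : x ∈ W.carrier) (hp : p ∈ W.edge 0)
    (hxp : W.height x = W.height p) : x ∈ W.edge 0 := by
  obtain ⟨n, hn⟩ := mem_iUnion.1 hx
  rcases le_or_gt 1 n with h | h
  · exact W.mem_edge_zero_of_one_le h hn (hxp.trans (height_eq_level hp))
  · have hp' : p ∈ W.reverse.edge 0 := by simpa [reverse] using hp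
    simpa [reverse] using W.reverse.mem_edge_zero_of_one_le (n := 1 - n) (by omega)
      (by simpa [reverse] using hn) (hxp.trans (height_eq_level hp'))

end Worm

theorem stmt4_general (𝒯 : PgramTiling)
    (W : Worm 𝒯) (p q : EuclideanSpace ℝ (Fin 2)) (hpq : W.edge 0 = segment ℝ p q) :
    W.carrier ⊆ segment ℝ p q ∪ ((affineSpan ℝ {p, q} : Set (EuclideanSpace ℝ (Fin 2)))ᶜ) := by
  intro x hx
  by_cases hline : x ∈ (affineSpan ℝ {p, q} : Set (EuclideanSpace ℝ (Fin 2)))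
  · have hp : p ∈ W.edge 0 := hpq ▸ left_mem_segment ℝ p q
    have hq : q ∈ W.edge 0 := hpq ▸ right_mem_segment ℝ p q
    have hxp : W.height x = W.height p := W.height.apply_eq_of_mem_affineSpan_pair
      ((Worm.height_eq_level hp).trans (Worm.height_eq_level hq).symm) hline
    exact .inl (hpq ▸ W.mem_edge_zero hx hp hxp)
  · exact .inr hline

/-- if the infimum of the interior angles is 0, the worm determined by an
edge e with endpoints p, q meets the affine line through e only in e itself. -/
theorem stmt4 (𝒯 : PgramTiling) (hinf : IsGLB (interiorAngles 𝒯) 0)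
    (W : Worm 𝒯) (p q : EuclideanSpace ℝ (Fin 2)) (hpq : W.edge 0 = segment ℝ p q) (hne : p ≠ q) :
    W.carrier ⊆ segment ℝ p q ∪ ((affineSpan ℝ {p, q} : Set (EuclideanSpace ℝ (Fin 2)))ᶜ) :=
  stmt4_general 𝒯 W p q hpq
end
end

section
/- There exists a locally finite, vertex-to-vertex parallelogram tiling of ℝ² with infinitely many prototiles, with all interior angles bounded below by a positive constant, in which some prototile (a square) occurs in infinitely many distinct orientations. -/
open InnerProductGeometry Real RealInnerProductSpace

noncomputable section

/-! Let `c = (pathX, pathY)` be the polygonal path through `0` whose `k`-th unit step points in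
direction `γ k = arctan k / 8`, and let `J` be the rotation by `π / 2`. The map
`(x, y) ↦ c x + J (c y)` sends the unit cell `[k, k+1] × [l, l+1]` onto the parallelogram spanned
by `dir (γ k)` and `dir (γ l + π / 2)`. All steps are within `1/4` of the horizontal, so this map is
a `1/2`-Lipschitz perturbation of the identity, hence a homeomorphism of the plane, and the images
of the unit cells form a locally finite vertex-to-vertex tiling. The cosine of a tile angle is
`± sin (γ k - γ l)`, of absolute value at most `1/2`. The diagonal tiles are unit squares turned by
the pairwise distinct angles `γ k`, while the rhombi `(n, 0)` have pairwise distinct diameters. -/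

namespace Pgram

variable (P Q : Pgram)

lemma exists_sub_eq_smul_add_smul {p q : EuclideanSpace ℝ (Fin 2)} (hp : p ∈ P.carrier)
    (hq : q ∈ P.carrier) : ∃ s t : ℝ, |s| ≤ 1 ∧ |t| ≤ 1 ∧ p - q = s • P.u + t • P.v := by
  obtain ⟨s, t, hs, ht, rfl⟩ := hp
  obtain ⟨s', t', hs', ht', rfl⟩ := hq
  refine ⟨s - s', t - t', ?_, ?_, by module⟩ <;> rw [abs_sub_le_iff] <;> constructor <;>
    linarith [hs.1, hs.2, ht.1, ht.2, hs'.1, hs'.2, ht'.1, ht'.2]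

lemma diam_carrier_of_inner_nonneg (h : 0 ≤ ⟪P.u, P.v⟫) :
    Metric.diam P.carrier = ‖P.u + P.v‖ := by
  have hbound : ∀ p ∈ P.carrier, ∀ q ∈ P.carrier, dist p q ≤ ‖P.u + P.v‖ := by
    intro p hp q hq
    obtain ⟨s, t, hs, ht, hpq⟩ := P.exists_sub_eq_smul_add_smul hp hq
    rw [dist_eq_norm, hpq, ← sq_le_sq₀ (norm_nonneg _) (norm_nonneg _), norm_add_sq_real,
      norm_add_sq_real, norm_smul, norm_smul, real_inner_smul_left, real_inner_smul_right,
      Real.norm_eq_abs, Real.norm_eq_abs, mul_pow, mul_pow, sq_abs, sq_abs]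
    have hs2 : s ^ 2 ≤ 1 := (sq_le_one_iff_abs_le_one s).2 hs
    have ht2 : t ^ 2 ≤ 1 := (sq_le_one_iff_abs_le_one t).2 ht
    have hst : s * t ≤ 1 :=
      (le_abs_self _).trans (abs_mul s t ▸ mul_le_one₀ hs (abs_nonneg t) ht)
    nlinarith [sq_nonneg ‖P.u‖, sq_nonneg ‖P.v‖]
  refine le_antisymm (Metric.diam_le_of_forall_dist_le (norm_nonneg _) hbound) ?_
  have h0 : P.a ∈ P.carrier := ⟨0, 0, by simp, by simp, by simp⟩
  have h1 : P.a + P.u + P.v ∈ P.carrier := ⟨1, 1, by simp, by simp, by simp⟩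
  calc ‖P.u + P.v‖ = dist (P.a + P.u + P.v) P.a := by rw [dist_eq_norm]; congr 1; abel
    _ ≤ Metric.diam P.carrier :=
      Metric.dist_le_diam_of_mem (Metric.isBounded_iff.2 ⟨_, hbound⟩) h1 h0

lemma congruent_of_linearIsometryEquiv
    (L : EuclideanSpace ℝ (Fin 2) ≃ₗᵢ[ℝ] EuclideanSpace ℝ (Fin 2))
    (hu : L P.u = Q.u) (hv : L P.v = Q.v) : PgramCongruent P Q := by
  let f := L.toIsometryEquiv.trans (IsometryEquiv.addRight (Q.a - L P.a))
  have hf : ∀ s t : ℝ, f (P.a + s • P.u + t • P.v) = Q.a + s • Q.u + t • Q.v := fun s t => by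
    simp only [f, IsometryEquiv.trans_apply, LinearIsometryEquiv.coe_toIsometryEquiv, map_add,
      map_smul, hu, hv, IsometryEquiv.addRight_apply]
    abel
  refine ⟨f, Set.ext fun z => ⟨?_, ?_⟩⟩
  · rintro ⟨_, ⟨s, t, hs, ht, rfl⟩, rfl⟩
    exact ⟨s, t, hs, ht, hf s t⟩
  · rintro ⟨s, t, hs, ht, rfl⟩
    exact ⟨_, ⟨s, t, hs, ht, rfl⟩, hf s t⟩

lemma congruent_of_orthonormal (hP : Orthonormal ℝ ![P.u, P.v])
    (hQ : Orthonormal ℝ ![Q.u, Q.v]) : PgramCongruent P Q := by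
  have hcard : Fintype.card (Fin 2) = Module.finrank ℝ (EuclideanSpace ℝ (Fin 2)) := by simp
  let bP := OrthonormalBasis.mk hP (hP.linearIndependent.span_eq_top_of_card_eq_finrank hcard).ge
  let bQ := OrthonormalBasis.mk hQ (hQ.linearIndependent.span_eq_top_of_card_eq_finrank hcard).ge
  have hL : ∀ i, (bP.repr.trans bQ.repr.symm) (bP i) = bQ i := fun i => by
    simp [OrthonormalBasis.repr_self, OrthonormalBasis.repr_symm_single]
  refine P.congruent_of_linearIsometryEquiv Q (bP.repr.trans bQ.repr.symm) ?_ ?_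
  · simpa [bP, bQ] using hL 0
  · simpa [bP, bQ] using hL 1

lemma abs_inner_le_of_isTranslate (hP : Orthonormal ℝ ![P.u, P.v]) (h : IsTranslate P Q) :
    |⟪Q.u + Q.v, P.u⟫| ≤ 1 ∧ |⟪Q.u + Q.v, P.v⟫| ≤ 1 := by
  obtain ⟨w, hw⟩ := h
  have h0 : Q.a ∈ Q.carrier := ⟨0, 0, by simp, by simp, by simp⟩
  have h1 : Q.a + Q.u + Q.v ∈ Q.carrier := ⟨1, 1, by simp, by simp, by simp⟩
  rw [hw] at h0 h1
  obtain ⟨p, hp, hp'⟩ := h0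
  obtain ⟨q, hq, hq'⟩ := h1
  obtain ⟨s, t, hs, ht, hqp⟩ := P.exists_sub_eq_smul_add_smul hq hp
  have hdiag : Q.u + Q.v = s • P.u + t • P.v := by
    rw [← hqp]
    beta_reduce at hp' hq'
    calc Q.u + Q.v = (q + w) - (p + w) := by rw [hq', hp']; abel
      _ = q - p := by abel
  have hu := hP.1 0
  have hv := hP.1 1
  have huv := hP.2 (show (0 : Fin 2) ≠ 1 by decide)
  simp only [Matrix.cons_val_zero, Matrix.cons_val_one] at hu hv huv
  rw [hdiag, inner_add_left, inner_add_left, real_inner_smul_left, real_inner_smul_left,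
    real_inner_smul_left, real_inner_smul_left, real_inner_self_eq_norm_sq,
    real_inner_self_eq_norm_sq, hu, hv, huv, real_inner_comm, huv]
  simpa using ⟨hs, ht⟩

end Pgram

lemma le_angle_of_inner_le_cos {V : Type*} [NormedAddCommGroup V] [InnerProductSpace ℝ V]
    {u v : V} {θ : ℝ} (hu : ‖u‖ = 1) (hv : ‖v‖ = 1) (hθ₀ : 0 ≤ θ) (hθπ : θ ≤ π)
    (h : ⟪u, v⟫ ≤ cos θ) : θ ≤ angle u v := by
  rw [angle, hu, hv, mul_one, div_one]
  calc θ = arccos (cos θ) := (arccos_cos hθ₀ hθπ).symm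
    _ ≤ arccos ⟪u, v⟫ := arccos_le_arccos h

lemma sin_two_mul_eq_zero_of_abs_cos_sub_sin_le {x : ℝ} (h₁ : |cos x - sin x| ≤ 1)
    (h₂ : |cos x + sin x| ≤ 1) : sin (2 * x) = 0 := by
  rw [← sq_le_one_iff_abs_le_one] at h₁ h₂
  rw [sin_two_mul]
  nlinarith [sin_sq_add_cos_sq x]

namespace RotatingGrid

open Set

def partialSum (f : ℤ → ℝ) (k : ℤ) : ℝ :=
  ∑ i ∈ Finset.Ico 0 k, f i - ∑ i ∈ Finset.Ico k 0, f i

lemma partialSum_succ (f : ℤ → ℝ) (k : ℤ) : partialSum f (k + 1) = partialSum f k + f k := by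
  rcases le_or_gt 0 k with hk | hk
  · rw [partialSum, partialSum, ← Finset.sum_Ico_add_eq_sum_Ico_add_one hk,
      Finset.Ico_eq_empty_of_le hk, Finset.Ico_eq_empty_of_le (show (0 : ℤ) ≤ k + 1 by omega)]
    ring
  · rw [partialSum, partialSum, ← Finset.insert_Ico_add_one_left_eq_Ico hk,
      Finset.sum_insert (by simp), Finset.Ico_eq_empty_of_le hk.le,
      Finset.Ico_eq_empty_of_le (show k + 1 ≤ 0 by omega)]
    ring

lemma monotone_partialSum {f : ℤ → ℝ} (hf : ∀ k, 0 ≤ f k) : Monotone (partialSum f) :=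
  monotone_int_of_le_succ fun k => by rw [partialSum_succ]; linarith [hf k]

lemma partialSum_affine (a c : ℝ) (f : ℤ → ℝ) (k : ℤ) :
    partialSum (fun i => a * f i + c) k = a * partialSum f k + c * k := by
  have hk : (k.toNat : ℝ) - ((-k).toNat : ℝ) = k := by exact_mod_cast Int.toNat_sub_toNat_neg k
  simp only [partialSum, Finset.sum_add_distrib, ← Finset.mul_sum, Finset.sum_const, Int.card_Ico,
    sub_zero, zero_sub, nsmul_eq_mul]
  linear_combination c * hk

def piecewiseLinear (f : ℤ → ℝ) (x : ℝ) : ℝ := partialSum f ⌊x⌋ + Int.fract x * f ⌊x⌋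

lemma piecewiseLinear_intCast (f : ℤ → ℝ) (k : ℤ) : piecewiseLinear f k = partialSum f k := by
  simp [piecewiseLinear]

lemma piecewiseLinear_intCast_add (f : ℤ → ℝ) (k : ℤ) {s : ℝ} (hs : s ∈ Icc (0 : ℝ) 1) :
    piecewiseLinear f (k + s) = partialSum f k + s * f k := by
  rcases hs.2.lt_or_eq with hs1 | rfl
  · have hfl : ⌊(k : ℝ) + s⌋ = k := by rw [Int.floor_eq_iff]; constructor <;> linarith [hs.1]
    rw [piecewiseLinear, hfl, Int.fract, hfl]
    ring
  · rw [show (k : ℝ) + 1 = ((k + 1 : ℤ) : ℝ) by push_cast; ring, piecewiseLinear_intCast,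
      partialSum_succ]
    ring

lemma piecewiseLinear_affine (a c : ℝ) (f : ℤ → ℝ) (x : ℝ) :
    piecewiseLinear (fun i => a * f i + c) x = a * piecewiseLinear f x + c * x := by
  rw [piecewiseLinear, piecewiseLinear, partialSum_affine, ← Int.floor_add_fract x]
  simp only [Int.floor_intCast_add, Int.fract_intCast_add, Int.floor_fract, Int.fract_fract,
    add_zero]
  ring

lemma monotone_piecewiseLinear {f : ℤ → ℝ} (hf : ∀ k, 0 ≤ f k) :
    Monotone (piecewiseLinear f) := by
  intro x y hxy
  rcases (Int.floor_le_floor hxy).eq_or_lt with h | h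
  · have : Int.fract x ≤ Int.fract y := by rw [Int.fract, Int.fract, h]; linarith
    rw [piecewiseLinear, piecewiseLinear, h]
    gcongr
    exact hf _
  · calc piecewiseLinear f x ≤ partialSum f (⌊x⌋ + 1) := by
          rw [piecewiseLinear, partialSum_succ]
          gcongr
          exact mul_le_of_le_one_left (hf _) (Int.fract_lt_one x).le
      _ ≤ partialSum f ⌊y⌋ := monotone_partialSum hf h
      _ ≤ piecewiseLinear f y := le_add_of_nonneg_right (mul_nonneg (Int.fract_nonneg y) (hf _))

lemma abs_piecewiseLinear_sub_le {f : ℤ → ℝ} {K : ℝ} (hf : ∀ k, |f k| ≤ K) {x y : ℝ}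
    (hxy : x ≤ y) : |piecewiseLinear f y - piecewiseLinear f x| ≤ K * (y - x) := by
  have hup := monotone_piecewiseLinear (f := fun i => 1 * f i + K)
    (fun k => by linarith [neg_abs_le (f k), hf k]) hxy
  have hdown := monotone_piecewiseLinear (f := fun i => -1 * f i + K)
    (fun k => by linarith [le_abs_self (f k), hf k]) hxy
  rw [piecewiseLinear_affine, piecewiseLinear_affine] at hup hdown
  rw [abs_le]
  constructor <;> linarith

lemma lipschitzWith_piecewiseLinear {f : ℤ → ℝ} {K : NNReal} (hf : ∀ k, |f k| ≤ K) :
    LipschitzWith K (piecewiseLinear f) := by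
  refine LipschitzWith.of_dist_le_mul fun x y => ?_
  rw [Real.dist_eq, Real.dist_eq]
  rcases le_total x y with h | h
  · rw [abs_sub_comm, abs_sub_comm x, abs_of_nonneg (sub_nonneg.2 h)]
    exact abs_piecewiseLinear_sub_le hf h
  · rw [abs_of_nonneg (sub_nonneg.2 h)]
    exact abs_piecewiseLinear_sub_le hf h

def γ (k : ℤ) : ℝ := arctan k / 8

lemma γ_strictMono : StrictMono γ := fun _ _ h =>
  div_lt_div_of_pos_right (arctan_strictMono (Int.cast_lt.2 h)) (by norm_num)

lemma abs_γ_lt (k : ℤ) : |γ k| < 1 / 4 := by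
  have := abs_lt.2 ⟨neg_pi_div_two_lt_arctan k, arctan_lt_pi_div_two k⟩
  rw [γ, abs_div, abs_of_pos (by norm_num : (0 : ℝ) < 8), div_lt_iff₀ (by norm_num)]
  linarith [pi_le_four]

lemma abs_γ_sub_lt (k l : ℤ) : |γ k - γ l| < 1 / 2 := by
  linarith [abs_sub (γ k) (γ l), abs_γ_lt k, abs_γ_lt l]

def pathX : ℝ → ℝ := piecewiseLinear fun k => cos (γ k)

def pathY : ℝ → ℝ := piecewiseLinear fun k => sin (γ k)

lemma lipschitzWith_pathX_sub_id : LipschitzWith (1 / 4) fun x => pathX x - x := by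
  have h : (fun x => pathX x - x) = piecewiseLinear fun k => 1 * cos (γ k) + -1 := by
    funext x
    rw [piecewiseLinear_affine, pathX]
    ring
  rw [h]
  refine lipschitzWith_piecewiseLinear fun k => ?_
  have h1 := one_sub_sq_div_two_le_cos (x := γ k)
  have h2 := cos_le_one (γ k)
  have h3 : γ k ^ 2 ≤ 1 / 16 := by nlinarith [abs_γ_lt k, abs_nonneg (γ k), sq_abs (γ k)]
  rw [abs_le]
  constructor <;> push_cast <;> linarith

lemma lipschitzWith_pathY : LipschitzWith (1 / 4) pathY :=
  lipschitzWith_piecewiseLinear fun k => by push_cast; exact abs_sin_le_abs.trans (abs_γ_lt k).le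

def gridMap (p : ℝ × ℝ) : ℝ × ℝ := (pathX p.1 - pathY p.2, pathY p.1 + pathX p.2)

lemma approximatesLinearOn_gridMap :
    ApproximatesLinearOn gridMap (ContinuousLinearEquiv.refl ℝ (ℝ × ℝ) : ℝ × ℝ →L[ℝ] ℝ × ℝ)
      univ (1 / 2) := by
  refine LipschitzOnWith.approximatesLinearOn (LipschitzWith.lipschitzOnWith ?_)
  have h₁ := (lipschitzWith_pathX_sub_id.comp LipschitzWith.prod_fst).sub
    (lipschitzWith_pathY.comp LipschitzWith.prod_snd)
  have h₂ := (lipschitzWith_pathY.comp LipschitzWith.prod_fst).add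
    (lipschitzWith_pathX_sub_id.comp LipschitzWith.prod_snd)
  have hsplit : gridMap - ⇑(ContinuousLinearEquiv.refl ℝ (ℝ × ℝ) : ℝ × ℝ →L[ℝ] ℝ × ℝ) =
      fun p => ((pathX p.1 - p.1) - pathY p.2, pathY p.1 + (pathX p.2 - p.2)) := by
    funext p
    simp only [gridMap, Pi.sub_apply, ContinuousLinearEquiv.coe_refl,
      ContinuousLinearMap.id_apply]
    ext <;> simp only [Prod.fst_sub, Prod.snd_sub] <;> ring
  rw [hsplit]
  refine (h₁.prodMk h₂).weaken ?_
  rw [max_self, ← NNReal.coe_le_coe]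
  norm_num

def grid : ℝ × ℝ ≃ₜ EuclideanSpace ℝ (Fin 2) :=
  (approximatesLinearOn_gridMap.toHomeomorph gridMap (Or.inr (by
      rw [ContinuousLinearEquiv.refl_symm, ContinuousLinearEquiv.coe_refl,
        ContinuousLinearMap.nnnorm_id, inv_one, ← NNReal.coe_lt_coe]
      norm_num))).trans
    ((ContinuousLinearEquiv.finTwoArrow ℝ ℝ).symm.trans
      (EuclideanSpace.equiv (Fin 2) ℝ).symm).toHomeomorph

lemma grid_apply (p : ℝ × ℝ) :
    grid p = !₂[pathX p.1 - pathY p.2, pathY p.1 + pathX p.2] := rfl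

def dir (θ : ℝ) : EuclideanSpace ℝ (Fin 2) := !₂[cos θ, sin θ]

lemma inner_dir (α β : ℝ) : ⟪dir α, dir β⟫ = cos (α - β) := by
  simp [dir, PiLp.inner_apply, Fin.sum_univ_two, cos_sub]
  ring

lemma norm_dir (θ : ℝ) : ‖dir θ‖ = 1 := by
  have h := inner_dir θ θ
  rw [sub_self, cos_zero, real_inner_self_eq_norm_sq] at h
  exact (pow_eq_one_iff_of_nonneg (norm_nonneg _) two_ne_zero).1 h

lemma orthonormal_dir (θ : ℝ) : Orthonormal ℝ ![dir θ, dir (θ + π / 2)] := by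
  rw [orthonormal_iff_ite]
  intro i j
  fin_cases i <;> fin_cases j <;> simp [inner_dir, norm_dir]

lemma linearIndependent_dir {α β : ℝ} (h : sin (β - α) ≠ 0) :
    LinearIndependent ℝ ![dir α, dir β] := by
  rw [LinearIndependent.pair_iff]
  intro s t hst
  have h₀ := congrArg (· 0) hst
  have h₁ := congrArg (· 1) hst
  simp [dir] at h₀ h₁
  rw [sin_sub] at h
  constructor
  · have : s * (sin β * cos α - cos β * sin α) = 0 := by
      linear_combination sin β * h₀ - cos β * h₁
    exact (mul_eq_zero.1 this).resolve_right h
  · have : t * (sin β * cos α - cos β * sin α) = 0 := by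
      linear_combination cos α * h₁ - sin α * h₀
    exact (mul_eq_zero.1 this).resolve_right h

lemma linearIndependent_tile_edges (k l : ℤ) :
    LinearIndependent ℝ ![dir (γ k), dir (γ l + π / 2)] := by
  refine linearIndependent_dir ?_
  rw [show γ l + π / 2 - γ k = γ l - γ k + π / 2 by ring, sin_add_pi_div_two]
  have := abs_lt.1 (abs_γ_sub_lt l k)
  exact (cos_pos_of_mem_Ioo ⟨by linarith [pi_gt_three], by linarith [pi_gt_three]⟩).ne'

def tile (k l : ℤ) : Pgram :=
  ⟨grid (k, l), dir (γ k), dir (γ l + π / 2), linearIndependent_tile_edges k l⟩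

lemma tile_a (k l : ℤ) : (tile k l).a = grid (k, l) := rfl

lemma tile_u (k l : ℤ) : (tile k l).u = dir (γ k) := rfl

lemma tile_v (k l : ℤ) : (tile k l).v = dir (γ l + π / 2) := rfl

def cell (k l : ℤ) : Set (ℝ × ℝ) := Icc (k : ℝ) (k + 1) ×ˢ Icc (l : ℝ) (l + 1)

lemma grid_intCast_add (k l : ℤ) {s t : ℝ} (hs : s ∈ Icc (0 : ℝ) 1) (ht : t ∈ Icc (0 : ℝ) 1) :
    grid (k + s, l + t) = (tile k l).a + s • (tile k l).u + t • (tile k l).v := by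
  ext i
  fin_cases i <;>
    simp [tile_a, tile_u, tile_v, grid_apply, dir, pathX, pathY,
      piecewiseLinear_intCast_add _ _ hs, piecewiseLinear_intCast_add _ _ ht,
      piecewiseLinear_intCast, cos_add_pi_div_two, sin_add_pi_div_two] <;> ring

lemma carrier_tile (k l : ℤ) : (tile k l).carrier = grid '' cell k l := by
  ext z
  constructor
  · rintro ⟨s, t, hs, ht, rfl⟩
    refine ⟨(k + s, l + t), ⟨?_, ?_⟩, grid_intCast_add k l hs ht⟩ <;>
      constructor <;> linarith [hs.1, hs.2, ht.1, ht.2]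
  · rintro ⟨p, ⟨⟨hx₀, hx₁⟩, ⟨hy₀, hy₁⟩⟩, rfl⟩
    have hs : p.1 - k ∈ Icc (0 : ℝ) 1 := ⟨by linarith, by linarith⟩
    have ht : p.2 - l ∈ Icc (0 : ℝ) 1 := ⟨by linarith, by linarith⟩
    refine ⟨p.1 - k, p.2 - l, hs, ht, ?_⟩
    rw [← grid_intCast_add k l hs ht]
    simp

lemma interior_carrier_tile (k l : ℤ) :
    interior (tile k l).carrier = grid '' (Ioo (k : ℝ) (k + 1) ×ˢ Ioo (l : ℝ) (l + 1)) := by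
  rw [carrier_tile, ← Homeomorph.image_interior, cell, interior_prod_eq, interior_Icc,
    interior_Icc]

lemma vertexSet_tile (k l : ℤ) : (tile k l).vertexSet =
    {z | ∃ m n : ℤ, (m = k ∨ m = k + 1) ∧ (n = l ∨ n = l + 1) ∧ z = grid (m, n)} := by
  have corner : ∀ s t : ℝ, s ∈ Icc (0 : ℝ) 1 → t ∈ Icc (0 : ℝ) 1 →
      (tile k l).a + s • (tile k l).u + t • (tile k l).v = grid (k + s, l + t) :=
    fun s t hs ht => (grid_intCast_add k l hs ht).symm
  have h0 : (0 : ℝ) ∈ Icc (0 : ℝ) 1 := ⟨le_rfl, zero_le_one⟩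
  have h1 : (1 : ℝ) ∈ Icc (0 : ℝ) 1 := ⟨zero_le_one, le_rfl⟩
  have c00 := corner 0 0 h0 h0
  have c10 := corner 1 0 h1 h0
  have c11 := corner 1 1 h1 h1
  have c01 := corner 0 1 h0 h1
  simp only [zero_smul, one_smul, add_zero] at c00 c10 c11 c01
  ext z
  simp only [Pgram.vertexSet, mem_insert_iff, mem_singleton_iff, mem_ofPred_eq]
  constructor
  · rintro (rfl | rfl | rfl | rfl)
    · exact ⟨k, l, .inl rfl, .inl rfl, c00⟩
    · exact ⟨k + 1, l, .inr rfl, .inl rfl, by rw [c10]; push_cast; rfl⟩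
    · exact ⟨k + 1, l + 1, .inr rfl, .inr rfl, by rw [c11]; push_cast; rfl⟩
    · exact ⟨k, l + 1, .inl rfl, .inr rfl, by rw [c01]; push_cast; rfl⟩
  · rintro ⟨m, n, rfl | rfl, rfl | rfl, rfl⟩ <;> push_cast
    · exact .inl c00.symm
    · exact .inr (.inr (.inr c01.symm))
    · exact .inr (.inl c10.symm)
    · exact .inr (.inr (.inl c11.symm))

lemma intCast_mem_cell_iff {m n k l : ℤ} :
    ((m : ℝ), (n : ℝ)) ∈ cell k l ↔ (m = k ∨ m = k + 1) ∧ (n = l ∨ n = l + 1) := by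
  simp only [cell, mem_prod, mem_Icc]
  norm_cast
  omega

lemma floor_eq_of_mem_Ioo {x : ℝ} {k : ℤ} (h : x ∈ Ioo (k : ℝ) (k + 1)) : ⌊x⌋ = k :=
  Int.floor_eq_iff.2 ⟨h.1.le, h.2⟩

lemma finite_setOf_cell_inter_nonempty {K : Set (ℝ × ℝ)} (hK : IsCompact K) :
    {q : ℤ × ℤ | (cell q.1 q.2 ∩ K).Nonempty}.Finite := by
  obtain ⟨R, hR⟩ := hK.isBounded.subset_closedBall 0
  refine ((finite_Icc ⌈-R - 1⌉ ⌊R⌋).prod (finite_Icc ⌈-R - 1⌉ ⌊R⌋)).subset ?_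
  rintro ⟨k, l⟩ ⟨p, ⟨⟨hx₀, hx₁⟩, ⟨hy₀, hy₁⟩⟩, hpK⟩
  have hp := mem_closedBall_zero_iff.1 (hR hpK)
  have h1 := abs_le.1 ((Real.norm_eq_abs _).symm.trans_le ((norm_fst_le p).trans hp))
  have h2 := abs_le.1 ((Real.norm_eq_abs _).symm.trans_le ((norm_snd_le p).trans hp))
  refine ⟨⟨Int.ceil_le.2 ?_, Int.le_floor.2 ?_⟩, ⟨Int.ceil_le.2 ?_, Int.le_floor.2 ?_⟩⟩ <;>
    push_cast <;> linarith

def tiles : Set Pgram := range fun q : ℤ × ℤ => tile q.1 q.2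

lemma exists_mem_tiles_mem_carrier (z : EuclideanSpace ℝ (Fin 2)) :
    ∃ P ∈ tiles, z ∈ P.carrier := by
  obtain ⟨p, rfl⟩ := grid.surjective z
  refine ⟨tile ⌊p.1⌋ ⌊p.2⌋, ⟨(⌊p.1⌋, ⌊p.2⌋), rfl⟩, ?_⟩
  rw [carrier_tile]
  exact ⟨p, ⟨⟨Int.floor_le _, (Int.lt_floor_add_one _).le⟩,
    ⟨Int.floor_le _, (Int.lt_floor_add_one _).le⟩⟩, rfl⟩

lemma interior_inter_interior_eq_empty : ∀ P ∈ tiles, ∀ Q ∈ tiles, P ≠ Q →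
    interior P.carrier ∩ interior Q.carrier = ∅ := by
  rintro _ ⟨⟨k, l⟩, rfl⟩ _ ⟨⟨k', l'⟩, rfl⟩ hne
  rw [interior_carrier_tile, interior_carrier_tile, ← image_inter grid.injective,
    image_eq_empty, eq_empty_iff_forall_notMem]
  rintro p ⟨⟨hx, hy⟩, ⟨hx', hy'⟩⟩
  have hk : k = k' := (floor_eq_of_mem_Ioo hx).symm.trans (floor_eq_of_mem_Ioo hx')
  have hl : l = l' := (floor_eq_of_mem_Ioo hy).symm.trans (floor_eq_of_mem_Ioo hy')
  subst hk hl
  exact hne rfl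

lemma finite_setOf_mem_tiles_inter_ball (z : EuclideanSpace ℝ (Fin 2)) (r : ℝ) :
    {P | P ∈ tiles ∧ (P.carrier ∩ Metric.ball z r).Nonempty}.Finite := by
  have hK := (isCompact_closedBall z r).image grid.symm.continuous
  refine ((finite_setOf_cell_inter_nonempty hK).image fun q => tile q.1 q.2).subset ?_
  rintro _ ⟨⟨⟨k, l⟩, rfl⟩, w, hw, hwz⟩
  rw [carrier_tile] at hw
  obtain ⟨p, hp, rfl⟩ := hw
  exact ⟨(k, l), ⟨p, hp, grid p, Metric.ball_subset_closedBall hwz, grid.symm_apply_apply p⟩, rfl⟩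

lemma mem_vertexSet_of_mem_carrier : ∀ P ∈ tiles, ∀ Q ∈ tiles, ∀ z ∈ P.vertexSet,
    z ∈ Q.carrier → z ∈ Q.vertexSet := by
  rintro _ ⟨⟨k, l⟩, rfl⟩ _ ⟨⟨k', l'⟩, rfl⟩ z hz hzQ
  rw [vertexSet_tile] at hz ⊢
  obtain ⟨m, n, -, -, rfl⟩ := hz
  rw [carrier_tile, grid.injective.mem_set_image, intCast_mem_cell_iff] at hzQ
  exact ⟨m, n, hzQ.1, hzQ.2, rfl⟩

def tiling : PgramTiling :=
  ⟨tiles, exists_mem_tiles_mem_carrier, interior_inter_interior_eq_empty,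
    finite_setOf_mem_tiles_inter_ball, mem_vertexSet_of_mem_carrier⟩

lemma inner_tile (k l : ℤ) : ⟪(tile k l).u, (tile k l).v⟫ = sin (γ k - γ l) := by
  rw [tile_u, tile_v, inner_dir, ← cos_sub_pi_div_two]
  ring_nf

lemma pi_div_three_le_of_mem_interiorAngles {θ : ℝ} (hθ : θ ∈ interiorAngles tiling) :
    π / 3 ≤ θ := by
  obtain ⟨_, ⟨⟨k, l⟩, rfl⟩, rfl | rfl⟩ := hθ
  all_goals
    have hsin := abs_le.1 (abs_sin_le_abs.trans (abs_γ_sub_lt k l).le)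
    have h₀ : 0 ≤ π / 3 := by positivity
    have hπ : π / 3 ≤ π := by linarith [pi_pos]
  · refine le_angle_of_inner_le_cos (norm_dir _) (norm_dir _) h₀ hπ ?_
    rw [cos_pi_div_three]
    exact (inner_tile k l).trans_le hsin.2
  · rw [← angle_neg_right]
    refine le_angle_of_inner_le_cos (norm_dir _) ((norm_neg _).trans (norm_dir _)) h₀ hπ ?_
    rw [cos_pi_div_three, inner_neg_right]
    linarith [inner_tile k l]

lemma not_congruent_tile {k k' l : ℤ} (hk : l ≤ k) (hk' : l ≤ k') (hne : k ≠ k') :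
    ¬ PgramCongruent (tile k l) (tile k' l) := by
  rintro ⟨f, hf⟩
  have hsin_nonneg : ∀ {m}, l ≤ m → 0 ≤ sin (γ m - γ l) := fun {m} h =>
    sin_nonneg_of_nonneg_of_le_pi (sub_nonneg.2 (γ_strictMono.monotone h))
      (by linarith [(abs_le.1 (abs_γ_sub_lt m l).le).2, pi_gt_three])
  have hdiam := f.diam_image (tile k l).carrier
  rw [hf, Pgram.diam_carrier_of_inner_nonneg _ ((inner_tile _ _).symm ▸ hsin_nonneg hk'),
    Pgram.diam_carrier_of_inner_nonneg _ ((inner_tile _ _).symm ▸ hsin_nonneg hk)] at hdiam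
  have hsq := congrArg (· ^ 2) hdiam
  simp only [norm_add_sq_real, inner_tile] at hsq
  simp only [tile_u, tile_v, norm_dir] at hsq
  have hmem : ∀ m, γ m - γ l ∈ Icc (-(π / 2)) (π / 2) := fun m => by
    have := abs_le.1 (abs_γ_sub_lt m l).le
    constructor <;> linarith [pi_gt_three]
  have hγ := injOn_sin (hmem k') (hmem k) (by linarith)
  exact hne (γ_strictMono.injective (by linarith)).symm

lemma congruent_tile_diag (i j : ℤ) : PgramCongruent (tile i i) (tile j j) :=
  Pgram.congruent_of_orthonormal _ _ (orthonormal_dir _) (orthonormal_dir _)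

lemma not_isTranslate_tile_diag {i j : ℤ} (hij : i ≠ j) :
    ¬ IsTranslate (tile i i) (tile j j) := by
  intro h
  have hON : Orthonormal ℝ ![(tile i i).u, (tile i i).v] := orthonormal_dir (γ i)
  obtain ⟨h₁, h₂⟩ := Pgram.abs_inner_le_of_isTranslate _ _ hON h
  simp only [tile_u, tile_v, inner_add_left, inner_dir] at h₁ h₂
  rw [show γ j + π / 2 - γ i = γ j - γ i + π / 2 by ring, cos_add_pi_div_two,
    ← sub_eq_add_neg] at h₁
  rw [show γ j - (γ i + π / 2) = γ j - γ i - π / 2 by ring, cos_sub_pi_div_two,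
    show γ j + π / 2 - (γ i + π / 2) = γ j - γ i by ring, add_comm] at h₂
  have hsin := sin_two_mul_eq_zero_of_abs_cos_sub_sin_le h₁ h₂
  have hδ := abs_lt.1 (abs_γ_sub_lt j i)
  rw [sin_eq_zero_iff_of_lt_of_lt (by linarith [pi_gt_three]) (by linarith [pi_gt_three])] at hsin
  exact hij (γ_strictMono.injective (by linarith)).symm

end RotatingGrid

/-- there is a locally finite, vertex-to-vertex parallelogram tiling with
infinitely many prototiles, interior angles bounded below by a positive constant, in
which a square prototile occurs in infinitely many orientations. -/
theorem stmt15 :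
    ∃ (𝒯 : PgramTiling) (α : ℝ), 0 < α ∧ (∀ θ ∈ interiorAngles 𝒯, α ≤ θ) ∧
      (∃ f : ℕ → Pgram, (∀ n, f n ∈ 𝒯.tiles) ∧
        ∀ i j, i ≠ j → ¬ PgramCongruent (f i) (f j)) ∧
      (∃ g : ℕ → Pgram, (∀ n, g n ∈ 𝒯.tiles) ∧
        (∀ n, (inner ℝ (g n).u (g n).v : ℝ) = 0 ∧ ‖(g n).u‖ = ‖(g n).v‖) ∧
        (∀ i j, PgramCongruent (g i) (g j)) ∧
        ∀ i j, i ≠ j → ¬ IsTranslate (g i) (g j)) := by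
  refine ⟨RotatingGrid.tiling, π / 3, by positivity,
    fun _ => RotatingGrid.pi_div_three_le_of_mem_interiorAngles,
    ⟨fun n => RotatingGrid.tile n 0, fun n => ⟨(n, 0), rfl⟩, fun i j hij => ?_⟩,
    ⟨fun n => RotatingGrid.tile n n, fun n => ⟨(n, n), rfl⟩, fun n => ?_,
      fun i j => RotatingGrid.congruent_tile_diag i j,
      fun i j hij => RotatingGrid.not_isTranslate_tile_diag (by exact_mod_cast hij)⟩⟩
  · exact RotatingGrid.not_congruent_tile (by positivity) (by positivity) (by exact_mod_cast hij)
  · rw [RotatingGrid.inner_tile, sub_self, sin_zero, RotatingGrid.tile_u, RotatingGrid.tile_v,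
      RotatingGrid.norm_dir, RotatingGrid.norm_dir]
    exact ⟨rfl, rfl⟩
end
end
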